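/- arXiv:2406.06011 — 6 statements merged into one kernel-verified Lean document; each statement's English description precedes it below -/
import Mathlib

section
/- Let Ω be a locally compact, non-compact Hausdorff space, α an aperiodic homeomorphism of Ω, and w a continuous positive function on Ω such that w and w⁻¹ = 1/w are bounded, so that T̃_{α,w}(f) = w·(f∘α) is an invertible bounded linear operator on C₀(Ω). Then the following are equivalent: (1) T̃_{α,w} is topologically semi-transitive on C₀(Ω); (2) for every compact subset K of Ω there exists a strictly increasing sequence (n_k) of natural numbers such that lim_{k→∞} [ ( sup_{t∈K} ∏_{j=0}^{n_k−1} w(α^{j−n_k}(t)) ) · ( sup_{t∈K} ∏_{j=0}^{n_k−1} (w(α^j(t)))⁻¹ ) ] = 0. -/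
/-!
With `W_n(t) = ∏_{j<n} w(αʲ t)` one has `Tⁿ f (t) = W_n(t) f(αⁿ t)`. If `f` and `g` vanish off
a compact `L`, then `‖Tⁿ f‖ ≤ (sup_L W_n ∘ α⁻ⁿ) ‖f‖` and `‖Sⁿ g‖ ≤ (sup_L W_n⁻¹) ‖g‖`. When the
product of the two suprema is small, a scalar `r > 0` makes `f + r⁻¹ Sⁿ g` close to `f` while
`r Tⁿ (f + r⁻¹ Sⁿ g) = r Tⁿ f + g` is close to `g`; compactly supported functions are dense, so `T`
is semi-transitive.

Conversely, let `φ` be a bump equal to `1` on `K` and apply semi-transitivity to the ball `B(φ, ε)`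
twice. Since `Tᵐ` is an open map (open mapping theorem), `n` can be taken past the aperiodicity
threshold of `supp φ`, and then `λ Tⁿ f ≈ φ` evaluated at `t ∈ K` and at `α⁻ⁿ t`, together with
`f ≈ φ`, bounds the two suprema by `|λ| ε / (1 - ε)` and `ε / (|λ| (1 - ε))`.
-/

open scoped ZeroAtInfty
open Filter Finset

/-- A bounded linear operator `T` on a complex normed space is *topologically
semi-transitive* if for every pair of nonempty open subsets `O₁, O₂` there exist
`n ∈ ℕ` and `λ ∈ ℂ \ {0}` such that `λ • T^n(O₁) ∩ O₂ ≠ ∅`. -/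
def IsSemiTransitive {E : Type*} [NormedAddCommGroup E] [NormedSpace ℂ E]
    (T : E →L[ℂ] E) : Prop :=
  ∀ O₁ O₂ : Set E, IsOpen O₁ → IsOpen O₂ → O₁.Nonempty → O₂.Nonempty →
    ∃ (n : ℕ) (lam : ℂ), 1 ≤ n ∧ lam ≠ 0 ∧ ∃ f ∈ O₁, lam • (T ^ n) f ∈ O₂

open Function Topology

lemma exists_pos_mul_lt_and_lt_mul {a b c : ℝ} (ha : 0 ≤ a) (hb : 0 ≤ b) (hc : 0 < c)
    (h : a * b < c * c) : ∃ r : ℝ, 0 < r ∧ r * a < c ∧ b < r * c := by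
  rcases ha.eq_or_lt with rfl | ha
  · refine ⟨b / c + 1, by positivity, by simpa using hc, ?_⟩
    rw [add_mul, div_mul_cancel₀ b hc.ne']
    linarith
  · have hbc : b / c < c / a := (div_lt_div_iff₀ hc ha).2 (by linarith [mul_comm a b])
    obtain ⟨r, hbr, hrc⟩ := exists_between hbc
    exact ⟨r, (div_nonneg hb hc.le).trans_lt hbr, (lt_div_iff₀ ha).1 hrc, (div_lt_iff₀ hc).1 hbr⟩

lemma exists_sq_div_one_sub_lt {δ : ℝ} (hδ : 0 < δ) :
    ∃ ε : ℝ, 0 < ε ∧ ε < 1 ∧ (ε / (1 - ε)) ^ 2 < δ := by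
  have hlim : Tendsto (fun ε : ℝ => (ε / (1 - ε)) ^ 2) (𝓝[>] 0) (𝓝 0) := by
    have : ContinuousAt (fun ε : ℝ => (ε / (1 - ε)) ^ 2) 0 :=
      ((continuousAt_id.div (continuousAt_const.sub continuousAt_id) (by norm_num)).pow 2)
    simpa using this.tendsto.mono_left nhdsWithin_le_nhds
  obtain ⟨ε, hεδ, hε⟩ := ((hlim.eventually (gt_mem_nhds hδ)).and (Ioo_mem_nhdsGT one_pos)).exists
  exact ⟨ε, hε.1, hε.2, hεδ⟩

lemma exists_strictMono_one_le_tendsto_zero {u : ℕ → ℝ} (hu : ∀ n, 0 ≤ u n)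
    (h : ∀ δ > 0, ∃ᶠ n in atTop, u n < δ) :
    ∃ n : ℕ → ℕ, StrictMono n ∧ (∀ k, 1 ≤ n k) ∧ Tendsto (u ∘ n) atTop (𝓝 0) := by
  have hclust : MapClusterPt 0 atTop u := by
    refine mapClusterPt_iff_frequently.2 fun s hs => ?_
    obtain ⟨δ, hδ, hball⟩ := Metric.mem_nhds_iff.1 hs
    refine (h δ hδ).mono fun n hn => hball ?_
    rwa [Metric.mem_ball, Real.dist_0_eq_abs, abs_of_nonneg (hu n)]
  obtain ⟨ψ, hψ, hlim⟩ := hclust.tendsto_subseq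
  exact ⟨ψ ∘ Nat.succ, hψ.comp (strictMono_nat_of_lt_succ fun _ => Nat.lt_succ_self _),
    fun k => (Nat.succ_le_succ (Nat.zero_le k)).trans (hψ.id_le _),
    hlim.comp (tendsto_add_atTop_nat 1)⟩

lemma pow_apply_pow_apply_eq_self {R M : Type*} [Semiring R] [TopologicalSpace M]
    [AddCommMonoid M] [Module R M] {T S : M →L[R] M} (hTS : ∀ f, T (S f) = f) (n : ℕ)
    (g : M) : (T ^ n) ((S ^ n) g) = g := by
  rw [FunLike.coe_pow_eq_iterate, FunLike.coe_pow_eq_iterate]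
  exact RightInverse.iterate hTS n g

section SemiTransitivity

variable {E : Type*} [NormedAddCommGroup E] [NormedSpace ℂ E]

theorem isSemiTransitive_of_dense {T S : E →L[ℂ] E} (hTS : ∀ f, T (S f) = f) {D : Set E}
    (hD : Dense D)
    (h : ∀ f ∈ D, ∀ g ∈ D, ∀ δ > 0, ∃ n, 1 ≤ n ∧ ‖(T ^ n) f‖ * ‖(S ^ n) g‖ < δ) :
    IsSemiTransitive T := by
  rintro O₁ O₂ hO₁ hO₂ ⟨f₁, hf₁⟩ ⟨g₁, hg₁⟩
  obtain ⟨ε₁, hε₁, hball₁⟩ := Metric.isOpen_iff.1 hO₁ f₁ hf₁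
  obtain ⟨ε₂, hε₂, hball₂⟩ := Metric.isOpen_iff.1 hO₂ g₁ hg₁
  obtain ⟨c, hc, hc₁, hc₂⟩ : ∃ c : ℝ, 0 < c ∧ c + c ≤ ε₁ ∧ c + c ≤ ε₂ :=
    ⟨min ε₁ ε₂ / 2, by positivity, by linarith [min_le_left ε₁ ε₂],
      by linarith [min_le_right ε₁ ε₂]⟩
  obtain ⟨f₀, hf₀D, hf₀⟩ := hD.exists_dist_lt f₁ hc
  obtain ⟨g₀, hg₀D, hg₀⟩ := hD.exists_dist_lt g₁ hc
  obtain ⟨n, hn, hsmall⟩ := h f₀ hf₀D g₀ hg₀D (c * c) (by positivity)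
  obtain ⟨r, hr, hrT, hrS⟩ :=
    exists_pos_mul_lt_and_lt_mul (norm_nonneg _) (norm_nonneg _) hc hsmall
  have hr' : (r : ℂ) ≠ 0 := by exact_mod_cast hr.ne'
  have hnorm_r : ‖(r : ℂ)‖ = r := Complex.norm_of_nonneg hr.le
  refine ⟨n, r, hn, hr', f₀ + (r : ℂ)⁻¹ • (S ^ n) g₀, hball₁ ?_, hball₂ ?_⟩
  · have : ‖(r : ℂ)⁻¹ • (S ^ n) g₀‖ < c := by
      rw [norm_smul, norm_inv, hnorm_r, inv_mul_lt_iff₀ hr]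
      exact hrS
    calc dist (f₀ + (r : ℂ)⁻¹ • (S ^ n) g₀) f₁
        ≤ dist (f₀ + (r : ℂ)⁻¹ • (S ^ n) g₀) f₀ + dist f₀ f₁ := dist_triangle _ _ _
      _ < c + c := by rw [dist_self_add_left, dist_comm]; exact add_lt_add this hf₀
      _ ≤ ε₁ := hc₁
  · have hsplit :
        (r : ℂ) • (T ^ n) (f₀ + (r : ℂ)⁻¹ • (S ^ n) g₀) = (r : ℂ) • (T ^ n) f₀ + g₀ := by
      rw [map_add, map_smul, pow_apply_pow_apply_eq_self hTS, smul_add, smul_inv_smul₀ hr']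
    have : ‖(r : ℂ) • (T ^ n) f₀‖ < c := by
      rw [norm_smul, hnorm_r]
      exact hrT
    calc dist ((r : ℂ) • (T ^ n) (f₀ + (r : ℂ)⁻¹ • (S ^ n) g₀)) g₁
        ≤ dist ((r : ℂ) • (T ^ n) f₀ + g₀) g₀ + dist g₀ g₁ := by
          rw [hsplit]; exact dist_triangle _ _ _
      _ < c + c := by rw [dist_add_self_left, dist_comm]; exact add_lt_add this hg₀
      _ ≤ ε₂ := hc₂

theorem IsSemiTransitive.exists_lt_pow [CompleteSpace E] {T : E →L[ℂ] E}
    (hT : IsSemiTransitive T) (hsurj : Surjective T) (m : ℕ) {O₁ O₂ : Set E}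
    (hO₁ : IsOpen O₁) (hO₂ : IsOpen O₂) (hne₁ : O₁.Nonempty) (hne₂ : O₂.Nonempty) :
    ∃ (n : ℕ) (lam : ℂ), m < n ∧ lam ≠ 0 ∧ ∃ f ∈ O₁, lam • (T ^ n) f ∈ O₂ := by
  have hopen : IsOpenMap (T ^ m) := (T ^ m).isOpenMap <| by
    simpa only [FunLike.coe_pow_eq_iterate] using hsurj.iterate m
  obtain ⟨n, lam, hn, hlam, _, ⟨f, hf, rfl⟩, hmem⟩ :=
    hT _ O₂ (hopen _ hO₁) hO₂ (hne₁.image _) hne₂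
  refine ⟨n + m, lam, by omega, hlam, f, hf, ?_⟩
  rwa [pow_add, mul_apply_eq_comp]

end SemiTransitivity

namespace ZeroAtInftyContinuousMap

variable {X β : Type*} [TopologicalSpace X] [NormedAddCommGroup β]

lemma norm_le_of_forall {f : C₀(X, β)} {M : ℝ} (hM : 0 ≤ M) (h : ∀ x, ‖f x‖ ≤ M) : ‖f‖ ≤ M :=
  (f.toBCF.norm_le hM).2 h

lemma norm_apply_le (f : C₀(X, β)) (x : X) : ‖f x‖ ≤ ‖f‖ :=
  f.toBCF.norm_coe_le_norm x

lemma dist_apply_le (f g : C₀(X, β)) (x : X) : dist (f x) (g x) ≤ dist f g :=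
  (f.toBCF.dist_coe_le_dist (g := g.toBCF) x).trans_eq dist_toBCF_eq_dist

theorem dense_hasCompactSupport [LocallyCompactSpace X] [RegularSpace X] [NormedSpace ℝ β] :
    Dense {f : C₀(X, β) | HasCompactSupport f} := by
  refine Metric.dense_iff.2 fun h ε hε => ?_
  obtain ⟨K, hK, hKsub⟩ :=
    mem_cocompact.1 (zero_at_infty h (Metric.ball_mem_nhds 0 (half_pos hε)))
  obtain ⟨χ, hχK, -, hχc, hχ01⟩ :=
    exists_continuous_one_zero_of_isCompact hK isClosed_empty (Set.disjoint_empty _)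
  have hχh : HasCompactSupport (⇑χ • ⇑h) := hχc.smul_right
  let h₀ : C₀(X, β) := ⟨⟨fun t => χ t • h t, by fun_prop⟩, hχh.is_zero_at_infty⟩
  have hclose : ∀ t, ‖h₀ t - h t‖ ≤ ε / 2 := by
    intro t
    have hsub : h₀ t - h t = (χ t - 1) • h t := by simp [h₀, sub_smul]
    have hχ1 : ‖χ t - 1‖ ≤ 1 := by
      rw [Real.norm_eq_abs, abs_le]
      constructor <;> linarith [(hχ01 t).1, (hχ01 t).2]
    by_cases ht : t ∈ K
    · rw [hsub, hχK ht]
      simp only [Pi.one_apply, sub_self, zero_smul, norm_zero]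
      positivity
    · have hsmall : ‖h t‖ < ε / 2 := by simpa using hKsub ht
      rw [hsub, norm_smul]
      nlinarith [norm_nonneg (χ t - 1), norm_nonneg (h t)]
  refine ⟨h₀, ?_, hχh⟩
  rw [Metric.mem_ball, dist_eq_norm]
  exact (norm_le_of_forall (by positivity) hclose).trans_lt (half_lt_self hε)

theorem exists_hasCompactSupport_eq_one {𝕜 : Type*} [RCLike 𝕜] [LocallyCompactSpace X]
    [RegularSpace X] {K : Set X} (hK : IsCompact K) :
    ∃ φ : C₀(X, 𝕜), HasCompactSupport φ ∧ ∀ t ∈ K, φ t = 1 := by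
  obtain ⟨χ, hχK, -, hχc, -⟩ :=
    exists_continuous_one_zero_of_isCompact hK isClosed_empty (Set.disjoint_empty _)
  have hχc' : HasCompactSupport fun t => (χ t : 𝕜) := hχc.comp_left RCLike.ofReal_zero
  refine ⟨⟨⟨fun t => (χ t : 𝕜), by fun_prop⟩, hχc'.is_zero_at_infty⟩, hχc', fun t ht => ?_⟩
  simp [hχK ht]

end ZeroAtInftyContinuousMap

section WeightedComposition

variable {Ω : Type*} [TopologicalSpace Ω]

-- The two factors of the weight condition, `sup_K ∏_{j<n} w ∘ α^(j-n)` and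
-- `sup_K ∏_{j<n} (w ∘ α^j)⁻¹`.
noncomputable def supBackwardWeight (α : Ω ≃ₜ Ω) (w : Ω → ℝ) (K : Set Ω) (n : ℕ) : ℝ :=
  sSup ((fun t => ∏ j ∈ range n, w ((⇑α.symm)^[n - j] t)) '' K)

noncomputable def supInvForwardWeight (α : Ω ≃ₜ Ω) (w : Ω → ℝ) (K : Set Ω) (n : ℕ) : ℝ :=
  sSup ((fun t => ∏ j ∈ range n, (w ((⇑α)^[j] t))⁻¹) '' K)

variable {α : Ω ≃ₜ Ω} {w : Ω → ℝ}

lemma supBackwardWeight_nonneg (hw : ∀ t, 0 ≤ w t) (K : Set Ω) (n : ℕ) :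
    0 ≤ supBackwardWeight α w K n :=
  Real.sSup_nonneg <| Set.forall_mem_image.2 fun _ _ => prod_nonneg fun _ _ => hw _

lemma supInvForwardWeight_nonneg (hw : ∀ t, 0 ≤ w t) (K : Set Ω) (n : ℕ) :
    0 ≤ supInvForwardWeight α w K n :=
  Real.sSup_nonneg <| Set.forall_mem_image.2 fun _ _ => prod_nonneg fun _ _ => inv_nonneg.2 (hw _)

lemma prod_symm_iterate_sub {M : Type*} [CommMonoid M] (α : Ω ≃ₜ Ω) (w : Ω → M) (n : ℕ)
    (t : Ω) :
    ∏ j ∈ range n, w ((⇑α.symm)^[n - j] t) = ∏ j ∈ range n, w ((⇑α)^[j] ((⇑α.symm)^[n] t)) := by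
  refine prod_congr rfl fun j hj => ?_
  have hjn : n = j + (n - j) := by rw [mem_range] at hj; omega
  rw [hjn, iterate_add_apply, LeftInverse.iterate α.apply_symm_apply j, ← hjn]

variable {T S : C₀(Ω, ℂ) →L[ℂ] C₀(Ω, ℂ)}

open ZeroAtInftyContinuousMap

lemma pow_apply_eq_prod_weight_mul (hT : ∀ f t, T f t = (w t : ℂ) * f (α t)) (n : ℕ)
    (f : C₀(Ω, ℂ)) (t : Ω) :
    (T ^ n) f t = ((∏ j ∈ range n, w ((⇑α)^[j] t) : ℝ) : ℂ) * f ((⇑α)^[n] t) := by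
  induction n generalizing f with
  | zero => simp
  | succ n ih =>
    rw [pow_succ, mul_apply_eq_comp, ih, hT, prod_range_succ, iterate_succ_apply']
    push_cast
    ring

lemma pow_apply_eq_prod_inv_weight_mul (hT : ∀ f t, T f t = (w t : ℂ) * f (α t))
    (hw : ∀ t, w t ≠ 0) (hTS : ∀ f, T (S f) = f) (n : ℕ) (g : C₀(Ω, ℂ)) (s : Ω) :
    (S ^ n) g s = ((∏ j ∈ range n, (w ((⇑α)^[j] ((⇑α.symm)^[n] s)))⁻¹ : ℝ) : ℂ) *
      g ((⇑α.symm)^[n] s) := by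
  have hg := pow_apply_eq_prod_weight_mul hT n ((S ^ n) g) ((⇑α.symm)^[n] s)
  rw [pow_apply_pow_apply_eq_self hTS, LeftInverse.iterate α.apply_symm_apply n s] at hg
  have hW : (∏ j ∈ range n, w ((⇑α)^[j] ((⇑α.symm)^[n] s)) : ℂ) ≠ 0 := by
    exact_mod_cast prod_ne_zero_iff.2 fun _ _ => hw _
  rw [hg, prod_inv_distrib]
  push_cast
  field_simp

lemma norm_pow_apply_le (hT : ∀ f t, T f t = (w t : ℂ) * f (α t)) (hw_cont : Continuous w)
    (hw : ∀ t, 0 ≤ w t) {L : Set Ω} (hL : IsCompact L) {f : C₀(Ω, ℂ)} (hf : ∀ t ∉ L, f t = 0)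
    (n : ℕ) : ‖(T ^ n) f‖ ≤ supBackwardWeight α w L n * ‖f‖ := by
  refine norm_le_of_forall (mul_nonneg (supBackwardWeight_nonneg hw L n) (norm_nonneg f))
    fun t => ?_
  rw [pow_apply_eq_prod_weight_mul hT, norm_mul, Complex.norm_real,
    Real.norm_of_nonneg (prod_nonneg fun _ _ => hw _)]
  by_cases ht : (⇑α)^[n] t ∈ L
  · refine mul_le_mul ?_ (norm_apply_le f _) (norm_nonneg _) (supBackwardWeight_nonneg hw L n)
    have hbdd := hL.bddAbove_image (continuous_finsetProd (range n) fun j _ =>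
      hw_cont.comp (α.symm.continuous.iterate (n - j))).continuousOn
    refine le_csSup hbdd ⟨_, ht, ?_⟩
    dsimp only
    rw [prod_symm_iterate_sub, LeftInverse.iterate α.symm_apply_apply n t]
  · rw [hf _ ht, norm_zero, mul_zero]
    exact mul_nonneg (supBackwardWeight_nonneg hw L n) (norm_nonneg f)

lemma norm_pow_apply_le_of_rightInverse (hT : ∀ f t, T f t = (w t : ℂ) * f (α t))
    (hw_cont : Continuous w) (hw_pos : ∀ t, 0 < w t) (hTS : ∀ f, T (S f) = f) {L : Set Ω}
    (hL : IsCompact L) {g : C₀(Ω, ℂ)} (hg : ∀ t ∉ L, g t = 0) (n : ℕ) :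
    ‖(S ^ n) g‖ ≤ supInvForwardWeight α w L n * ‖g‖ := by
  have hB := supInvForwardWeight_nonneg (α := α) (fun t => (hw_pos t).le) L n
  refine norm_le_of_forall (mul_nonneg hB (norm_nonneg g)) fun s => ?_
  rw [pow_apply_eq_prod_inv_weight_mul hT (fun t => (hw_pos t).ne') hTS, norm_mul,
    Complex.norm_real, Real.norm_of_nonneg (prod_nonneg fun _ _ => (inv_pos.2 (hw_pos _)).le)]
  by_cases hs : (⇑α.symm)^[n] s ∈ L
  · refine mul_le_mul ?_ (norm_apply_le g _) (norm_nonneg _) hB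
    exact le_csSup (hL.bddAbove_image (continuous_finsetProd (range n) fun j _ =>
      (hw_cont.comp (α.continuous.iterate j)).inv₀ fun _ => (hw_pos _).ne').continuousOn)
      ⟨_, hs, rfl⟩
  · rw [hg _ hs, norm_zero, mul_zero]
    exact mul_nonneg hB (norm_nonneg g)

lemma supInvForwardWeight_le (hT : ∀ f t, T f t = (w t : ℂ) * f (α t))
    (hw_pos : ∀ t, 0 < w t) {K F : Set Ω} (hKF : K ⊆ F) {φ : C₀(Ω, ℂ)}
    (hφK : ∀ t ∈ K, φ t = 1) (hφF : ∀ t ∉ F, φ t = 0) {n : ℕ}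
    (hdisj : Disjoint ((⇑α)^[n] '' F) F) {ε : ℝ} (hε : ε < 1) {lam : ℂ} {f : C₀(Ω, ℂ)}
    (hf : dist f φ < ε) (hTf : dist (lam • (T ^ n) f) φ < ε) :
    supInvForwardWeight α w K n ≤ ‖lam‖ * ε / (1 - ε) := by
  have hε₀ : 0 < ε := dist_nonneg.trans_lt hf
  refine Real.sSup_le (Set.forall_mem_image.2 fun t ht => ?_) (by have := sub_pos.2 hε; positivity)
  set W := ∏ j ∈ range n, w ((⇑α)^[j] t) with hW_def
  have hW : 0 < W := prod_pos fun _ _ => hw_pos _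
  have hfs : ‖f ((⇑α)^[n] t)‖ < ε := by
    have := (dist_apply_le f φ ((⇑α)^[n] t)).trans_lt hf
    rwa [hφF _ (Set.disjoint_left.1 hdisj ⟨t, hKF ht, rfl⟩), dist_zero_right] at this
  have hTft : 1 - ε < ‖lam‖ * W * ε := by
    have hdist := (dist_apply_le _ _ t).trans_lt hTf
    rw [ZeroAtInftyContinuousMap.smul_apply, pow_apply_eq_prod_weight_mul hT, ← hW_def, hφK t ht,
      smul_eq_mul, dist_eq_norm] at hdist
    have := norm_sub_norm_le (1 : ℂ) (lam * (W * f ((⇑α)^[n] t)))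
    rw [norm_sub_rev, norm_one, norm_mul, norm_mul, Complex.norm_real,
      Real.norm_of_nonneg hW.le] at this
    have hle : ‖lam‖ * (W * ‖f ((⇑α)^[n] t)‖) ≤ ‖lam‖ * W * ε := by
      rw [← mul_assoc]; gcongr
    linarith
  rw [prod_inv_distrib, le_div_iff₀ (sub_pos.2 hε)]
  calc W⁻¹ * (1 - ε) ≤ W⁻¹ * (‖lam‖ * W * ε) := by gcongr
    _ = ‖lam‖ * ε := by field_simp

lemma supBackwardWeight_le (hT : ∀ f t, T f t = (w t : ℂ) * f (α t))
    (hw_pos : ∀ t, 0 < w t) {K F : Set Ω} (hKF : K ⊆ F) {φ : C₀(Ω, ℂ)}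
    (hφK : ∀ t ∈ K, φ t = 1) (hφF : ∀ t ∉ F, φ t = 0) {n : ℕ}
    (hdisj : Disjoint ((⇑α)^[n] '' F) F) {ε : ℝ} (hε : ε < 1) {lam : ℂ} (hlam : lam ≠ 0)
    {f : C₀(Ω, ℂ)} (hf : dist f φ < ε) (hTf : dist (lam • (T ^ n) f) φ < ε) :
    supBackwardWeight α w K n ≤ ε / (‖lam‖ * (1 - ε)) := by
  have hε₀ : 0 < ε := dist_nonneg.trans_lt hf
  have hpos : 0 < ‖lam‖ * (1 - ε) := mul_pos (norm_pos_iff.2 hlam) (sub_pos.2 hε)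
  refine Real.sSup_le (Set.forall_mem_image.2 fun t ht => ?_) (by positivity)
  set s := (⇑α.symm)^[n] t
  have hαs : (⇑α)^[n] s = t := LeftInverse.iterate α.apply_symm_apply n t
  set W := ∏ j ∈ range n, w ((⇑α)^[j] s)
  have hW : 0 < W := prod_pos fun _ _ => hw_pos _
  have hft : 1 - ε < ‖f t‖ := by
    have hdist := (dist_apply_le f φ t).trans_lt hf
    rw [hφK t ht, dist_eq_norm] at hdist
    linarith [norm_sub_norm_le (1 : ℂ) (f t), norm_sub_rev (f t) 1, norm_one (α := ℂ)]
  have hTfs : ‖lam‖ * W * ‖f t‖ < ε := by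
    have hdist := (dist_apply_le _ _ s).trans_lt hTf
    rwa [hφF s fun hs => Set.disjoint_left.1 hdisj ⟨s, hs, hαs⟩ (hKF ht), dist_zero_right,
      ZeroAtInftyContinuousMap.smul_apply, pow_apply_eq_prod_weight_mul hT, hαs, smul_eq_mul,
      norm_mul, norm_mul, Complex.norm_real, Real.norm_of_nonneg hW.le, ← mul_assoc] at hdist
  show ∏ j ∈ range n, w ((⇑α.symm)^[n - j] t) ≤ _
  rw [prod_symm_iterate_sub, le_div_iff₀ hpos]
  calc W * (‖lam‖ * (1 - ε)) ≤ ‖lam‖ * W * ‖f t‖ := by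
        rw [mul_left_comm, ← mul_assoc]; gcongr
    _ ≤ ε := hTfs.le

end WeightedComposition

section WeightCondition

variable {Ω : Type*} [TopologicalSpace Ω] [LocallyCompactSpace Ω] {α : Ω ≃ₜ Ω} {w : Ω → ℝ}
  {T : C₀(Ω, ℂ) →L[ℂ] C₀(Ω, ℂ)}

open ZeroAtInftyContinuousMap

theorem IsSemiTransitive.frequently_supBackwardWeight_mul_supInvForwardWeight_lt [T2Space Ω]
    (hst : IsSemiTransitive T) (hsurj : Surjective T) (hT : ∀ f t, T f t = (w t : ℂ) * f (α t))
    (hw_pos : ∀ t, 0 < w t)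
    (haper : ∀ K : Set Ω, IsCompact K → ∃ N : ℕ, ∀ n ≥ N, Disjoint ((⇑α)^[n] '' K) K)
    {K : Set Ω} (hK : IsCompact K) {δ : ℝ} (hδ : 0 < δ) :
    ∃ᶠ n in atTop, supBackwardWeight α w K n * supInvForwardWeight α w K n < δ := by
  obtain ⟨ε, hε₀, hε₁, hεδ⟩ := exists_sq_div_one_sub_lt hδ
  obtain ⟨φ, hφc, hφK⟩ := exists_hasCompactSupport_eq_one (𝕜 := ℂ) hK
  have hKF : K ⊆ tsupport φ := fun t ht => subset_tsupport _ (by simp [hφK t ht])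
  have hφF : ∀ t ∉ tsupport φ, φ t = 0 := fun t ht => image_eq_zero_of_notMem_tsupport ht
  obtain ⟨N, hN⟩ := haper _ hφc
  refine frequently_atTop.2 fun m => ?_
  have hball : (Metric.ball φ ε).Nonempty := ⟨φ, Metric.mem_ball_self hε₀⟩
  obtain ⟨n, lam, hn, hlam, f, hf, hTf⟩ :=
    hst.exists_lt_pow hsurj (max m N) Metric.isOpen_ball Metric.isOpen_ball hball hball
  have hdisj := hN n (le_of_max_le_right hn.le)
  refine ⟨n, le_of_max_le_left hn.le, ?_⟩
  calc supBackwardWeight α w K n * supInvForwardWeight α w K n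
      ≤ ε / (‖lam‖ * (1 - ε)) * (‖lam‖ * ε / (1 - ε)) :=
        mul_le_mul (supBackwardWeight_le hT hw_pos hKF hφK hφF hdisj hε₁ hlam hf hTf)
          (supInvForwardWeight_le hT hw_pos hKF hφK hφF hdisj hε₁ hf hTf)
          (supInvForwardWeight_nonneg (fun t => (hw_pos t).le) K n)
          (by have := sub_pos.2 hε₁; positivity)
    _ = (ε / (1 - ε)) ^ 2 := by field_simp
    _ < δ := hεδ

theorem isSemiTransitive_of_forall_exists_supBackwardWeight_mul_supInvForwardWeight_lt
    [RegularSpace Ω] {S : C₀(Ω, ℂ) →L[ℂ] C₀(Ω, ℂ)} (hT : ∀ f t, T f t = (w t : ℂ) * f (α t))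
    (hTS : ∀ f, T (S f) = f) (hw_cont : Continuous w) (hw_pos : ∀ t, 0 < w t)
    (h : ∀ K : Set Ω, IsCompact K → ∀ δ > 0,
      ∃ n, 1 ≤ n ∧ supBackwardWeight α w K n * supInvForwardWeight α w K n < δ) :
    IsSemiTransitive T := by
  refine isSemiTransitive_of_dense hTS dense_hasCompactSupport fun f hf g hg δ hδ => ?_
  have hw : ∀ t, 0 ≤ w t := fun t => (hw_pos t).le
  have hL : IsCompact (tsupport f ∪ tsupport g) := IsCompact.union hf hg
  obtain ⟨n, hn, hlt⟩ := h _ hL (δ / (‖f‖ * ‖g‖ + 1)) (by positivity)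
  refine ⟨n, hn, ?_⟩
  have hTf := norm_pow_apply_le hT hw_cont hw hL
    (fun t ht => image_eq_zero_of_notMem_tsupport fun h => ht (Or.inl h)) n
  have hSg := norm_pow_apply_le_of_rightInverse hT hw_cont hw_pos hTS hL
    (fun t ht => image_eq_zero_of_notMem_tsupport fun h => ht (Or.inr h)) n
  set A := supBackwardWeight α w (tsupport f ∪ tsupport g) n
  set B := supInvForwardWeight α w (tsupport f ∪ tsupport g) n
  have hA : 0 ≤ A := supBackwardWeight_nonneg hw _ n
  have hB : 0 ≤ B := supInvForwardWeight_nonneg hw _ n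
  calc ‖(T ^ n) f‖ * ‖(S ^ n) g‖ ≤ A * ‖f‖ * (B * ‖g‖) := by gcongr
    _ = A * B * (‖f‖ * ‖g‖) := by ring
    _ ≤ A * B * (‖f‖ * ‖g‖ + 1) := by gcongr; linarith
    _ < δ := (lt_div_iff₀ (by positivity)).1 hlt

end WeightCondition

theorem semi_transitive_iff_weight_condition_C0_general
    {Ω : Type*} [TopologicalSpace Ω] [LocallyCompactSpace Ω] [T2Space Ω]
    (α : Ω ≃ₜ Ω)
    (haper : ∀ K : Set Ω, IsCompact K →
      ∃ N : ℕ, 0 < N ∧ ∀ n ≥ N, ((⇑α)^[n] '' K) ∩ K = ∅)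
    (w : Ω → ℝ) (hw_cont : Continuous w) (hw_pos : ∀ t, 0 < w t)
    (T S : C₀(Ω, ℂ) →L[ℂ] C₀(Ω, ℂ))
    (hT : ∀ (f : C₀(Ω, ℂ)) (t : Ω), T f t = (w t : ℂ) * f (α t))
    (hTS : ∀ f, T (S f) = f) :
    IsSemiTransitive T ↔
      ∀ K : Set Ω, IsCompact K →
        ∃ n : ℕ → ℕ, StrictMono n ∧ (∀ k, 1 ≤ n k) ∧
          Tendsto (fun k =>
              sSup ((fun t => ∏ j ∈ range (n k), w ((⇑α.symm)^[n k - j] t)) '' K) *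
              sSup ((fun t => ∏ j ∈ range (n k), (w ((⇑α)^[j] t))⁻¹) '' K))
            atTop (nhds 0) := by
  have hw : ∀ t, 0 ≤ w t := fun t => (hw_pos t).le
  constructor
  · intro hst K hK
    have haper' : ∀ K : Set Ω, IsCompact K → ∃ N : ℕ, ∀ n ≥ N, Disjoint ((⇑α)^[n] '' K) K :=
      fun K hK => (haper K hK).imp fun _ hN n hn => Set.disjoint_iff_inter_eq_empty.2 (hN.2 n hn)
    exact exists_strictMono_one_le_tendsto_zero
      (fun n => mul_nonneg (supBackwardWeight_nonneg hw K n) (supInvForwardWeight_nonneg hw K n))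
      fun δ hδ => hst.frequently_supBackwardWeight_mul_supInvForwardWeight_lt
        (fun g => ⟨S g, hTS g⟩) hT hw_pos haper' hK hδ
  · intro hcond
    refine isSemiTransitive_of_forall_exists_supBackwardWeight_mul_supInvForwardWeight_lt hT hTS
      hw_cont hw_pos fun K hK δ hδ => ?_
    obtain ⟨n, -, hn, hlim⟩ := hcond K hK
    obtain ⟨k, hk⟩ := (hlim.eventually (gt_mem_nhds hδ)).exists
    exact ⟨n k, hn k, hk⟩

theorem semi_transitive_iff_weight_condition_C0
    {Ω : Type*} [TopologicalSpace Ω] [LocallyCompactSpace Ω] [T2Space Ω]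
    [NoncompactSpace Ω]
    (α : Ω ≃ₜ Ω)
    (haper : ∀ K : Set Ω, IsCompact K →
      ∃ N : ℕ, 0 < N ∧ ∀ n ≥ N, ((⇑α)^[n] '' K) ∩ K = ∅)
    (w : Ω → ℝ) (hw_cont : Continuous w) (hw_pos : ∀ t, 0 < w t)
    (hw_bdd : ∃ C, ∀ t, w t ≤ C) (hw_inv_bdd : ∃ C, ∀ t, (w t)⁻¹ ≤ C)
    (T S : C₀(Ω, ℂ) →L[ℂ] C₀(Ω, ℂ))
    (hT : ∀ (f : C₀(Ω, ℂ)) (t : Ω), T f t = (w t : ℂ) * f (α t))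
    (hST : ∀ f, S (T f) = f) (hTS : ∀ f, T (S f) = f) :
    IsSemiTransitive T ↔
      ∀ K : Set Ω, IsCompact K →
        ∃ n : ℕ → ℕ, StrictMono n ∧ (∀ k, 1 ≤ n k) ∧
          Tendsto (fun k =>
              sSup ((fun t => ∏ j ∈ range (n k), w ((⇑α.symm)^[n k - j] t)) '' K) *
              sSup ((fun t => ∏ j ∈ range (n k), (w ((⇑α)^[j] t))⁻¹) '' K))
            atTop (nhds 0) :=
  semi_transitive_iff_weight_condition_C0_general α haper w hw_cont hw_pos T S hT hTS
end

section
/- Let 0 < λ ≤ 1/2. For every g ∈ C₀(ℝ), the set Γ_g := { f ∈ C₀(ℝ) : |f(m)| ≥ |g(m)| for all m ∈ ℤ } is not σ-λ-porous in C₀(ℝ); that is, Γ_g is not a countable union of λ-porous subsets of C₀(ℝ). -/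
open scoped ZeroAtInfty

/-- For `0 < λ < 1`, a subset `E` of a metric space is *λ-porous at* `x ∈ E` if for each
`δ > 0` there is `y ∈ B(x; δ) \ {x}` with `B(y; λ·d(x,y)) ∩ E = ∅`. -/
def IsPorousAt {X : Type*} [MetricSpace X] (lam : ℝ) (E : Set X) (x : X) : Prop :=
  ∀ δ > 0, ∃ y ∈ Metric.ball x δ, y ≠ x ∧ Metric.ball y (lam * dist x y) ∩ E = ∅

/-- `E` is *λ-porous* if it is λ-porous at each of its points. -/
def IsPorous {X : Type*} [MetricSpace X] (lam : ℝ) (E : Set X) : Prop :=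
  ∀ x ∈ E, IsPorousAt lam E x

/-- `E` is *σ-λ-porous* if it is a countable union of λ-porous subsets. -/
def IsSigmaPorous {X : Type*} [MetricSpace X] (lam : ℝ) (E : Set X) : Prop :=
  ∃ S : ℕ → Set X, (∀ n, IsPorous lam (S n)) ∧ E = ⋃ n, S n

/-!
For a margin `a : ℤ → ℝ` vanishing at infinity let `M(a) = {f | ∀ m, a m ≤ ‖f m‖}`, so that
`Γ_g = M(‖g ·‖)`. Enlarging `a` to `a' = a + min(δ, 2a/λ)` gives a closed set `M(a')` with points
arbitrarily close to any point of `M(a)`, such that every `y` at distance `d < δ` from `M(a')` lies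
within `λd/2` of `M(a)`: where `a m ≤ λd/2`, raising `‖y m‖` by a tent of height `≤ a m` suffices, and
elsewhere `y` keeps the margin `a m`.

Given `λ`-porous sets `S n`, a nested-ball construction (Foran's lemma) then produces a point of
`Γ_g` outside every `S n`: at stage `n` either `S n` misses a ball around a point of the current
margin set, and we move into it, or `S n` is dense there, and then `S n` cannot be `λ`-porous at
points of the refined margin set.
-/

open Filter Metric Set Topology

section Foran

variable {X ι : Type*} [MetricSpace X] {lam : ℝ}

def UniformlyNonporousOn (lam δ : ℝ) (B A : Set X) : Prop :=
  ∀ s ∈ A, ∀ y, 0 < dist s y → dist s y < δ → (ball y (lam * dist s y) ∩ B).Nonempty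

lemma not_isPorousAt_of_uniformlyNonporousOn (hlam : 0 < lam) {A B S : Set X} {c x : X}
    {r δ : ℝ} (hδ : 0 < δ) (hB : UniformlyNonporousOn lam δ B A)
    (hS : ∀ v ∈ B ∩ ball c r, ∀ ρ > 0, (ball v ρ ∩ S).Nonempty)
    (hxA : x ∈ A) (hxc : dist x c < r / 2) : ¬ IsPorousAt lam S x := by
  intro hpor
  have hr : 0 < r := by linarith [dist_nonneg (x := x) (y := c)]
  obtain ⟨y, hyx, hy_ne, hhole⟩ := hpor (min δ (r / (2 * (1 + lam)))) (by positivity)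
  rw [mem_ball, dist_comm] at hyx
  set d := dist x y
  have hd : 0 < d := dist_pos.2 hy_ne.symm
  obtain ⟨z, hzy, hzB⟩ := hB x hxA y hd (hyx.trans_le (min_le_left _ _))
  rw [mem_ball] at hzy
  have hzc : dist z c < r := by
    have hd' : (1 + lam) * d < r / 2 := by
      have := hyx.trans_le (min_le_right _ _)
      rw [lt_div_iff₀ (by positivity)] at this
      linarith
    calc dist z c ≤ dist z y + dist y x + dist x c := dist_triangle4 _ _ _ _
      _ < r := by rw [dist_comm y x]; linarith
  obtain ⟨w, hwz, hwS⟩ := hS z ⟨hzB, mem_ball.2 hzc⟩ _ (sub_pos.2 hzy)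
  have hwy : w ∈ ball y (lam * d) := by
    rw [mem_ball] at hwz ⊢
    linarith [dist_triangle w z y]
  exact (hhole ▸ ⟨hwy, hwS⟩ : w ∈ (∅ : Set X))

def HasNonporousRefinements (lam : ℝ) (D : ι → Set X) : Prop :=
  ∀ i, ∀ x ∈ D i, ∀ ε > 0, ∃ j, D j ⊆ D i ∧ (∃ x' ∈ D j, dist x' x < ε) ∧
    ∃ δ > 0, UniformlyNonporousOn lam δ (D i) (D j)

structure NestedBall (D : ι → Set X) where
  idx : ι
  center : X
  radius : ℝ
  center_mem : center ∈ D idx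
  radius_pos : 0 < radius

lemma exists_nestedBall_step (hlam : 0 < lam) {D : ι → Set X}
    (hD : HasNonporousRefinements lam D)
    (S : Set X) (b : NestedBall D) :
    ∃ b' : NestedBall D, D b'.idx ⊆ D b.idx ∧
      closedBall b'.center b'.radius ⊆ closedBall b.center b.radius ∧
      b'.radius ≤ b.radius / 2 ∧
      ∀ x ∈ closedBall b'.center b'.radius ∩ D b'.idx, x ∈ S → ¬ IsPorousAt lam S x := by
  obtain ⟨i, c, r, hc, hr⟩ := b
  by_cases hgap : ∃ v ∈ D i ∩ ball c r, ∃ ρ > 0, ball v ρ ∩ S = ∅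
  · obtain ⟨v, ⟨hv, hvc⟩, ρ, hρ, hhole⟩ := hgap
    rw [mem_ball] at hvc
    set t := min ρ (r - dist v c)
    have ht : 0 < t := lt_min hρ (by linarith)
    refine ⟨⟨i, v, t / 2, hv, half_pos ht⟩, subset_rfl, fun w hw => ?_, ?_, ?_⟩
    · rw [mem_closedBall] at hw ⊢
      linarith [dist_triangle w v c, min_le_right ρ (r - dist v c)]
    · dsimp only
      linarith [min_le_right ρ (r - dist v c), dist_nonneg (x := v) (y := c)]
    · rintro x ⟨hxv, -⟩ hxS
      have hxρ : x ∈ ball v ρ := by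
        rw [mem_closedBall] at hxv
        rw [mem_ball]
        linarith [min_le_left ρ (r - dist v c)]
      exact absurd (hhole ▸ ⟨hxρ, hxS⟩ : x ∈ (∅ : Set X)) (notMem_empty x)
  · push Not at hgap
    obtain ⟨j, hji, ⟨x', hx', hx'c⟩, δ, hδ, hB⟩ := hD i c hc (r / 4) (by positivity)
    refine ⟨⟨j, x', r / 4, hx', by positivity⟩, hji, fun w hw => ?_, by dsimp only; linarith,
      fun x ⟨hxx', hxD⟩ _ => ?_⟩
    · rw [mem_closedBall] at hw ⊢
      linarith [dist_triangle w x' c]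
    · refine not_isPorousAt_of_uniformlyNonporousOn hlam hδ hB hgap hxD ?_
      rw [mem_closedBall] at hxx'
      linarith [dist_triangle x x' c]

theorem not_subset_iUnion_porous [CompleteSpace X] (hlam : 0 < lam) {D : ι → Set X}
    (hD : HasNonporousRefinements lam D) (hclosed : ∀ i, IsClosed (D i))
    {i₀ : ι} {x₀ : X} (hx₀ : x₀ ∈ D i₀) {S : ℕ → Set X} (hS : ∀ n, IsPorous lam (S n)) :
    ¬ D i₀ ⊆ ⋃ n, S n := by
  choose next hnext using fun n => exists_nestedBall_step hlam hD (S n)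
  let b : ℕ → NestedBall D := fun n => Nat.rec ⟨i₀, x₀, 1, hx₀, one_pos⟩ next n
  let K n := closedBall (b n).center (b n).radius ∩ D (b n).idx
  have hK : Antitone K := antitone_nat_of_succ_le fun n =>
    inter_subset_inter (hnext n (b n)).2.1 (hnext n (b n)).1
  have hrad : ∀ n, (b n).radius ≤ (1 / 2) ^ n := by
    intro n
    induction n with
    | zero => simp [b]
    | succ n ih =>
      calc (b (n + 1)).radius ≤ (b n).radius / 2 := (hnext n (b n)).2.2.1
        _ ≤ (1 / 2) ^ (n + 1) := by rw [pow_succ]; linarith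
  have hdiam : Tendsto (fun n => diam (K n)) atTop (𝓝 0) := by
    have hgeom : Tendsto (fun n : ℕ => 2 * (1 / 2 : ℝ) ^ n) atTop (𝓝 0) := by
      simpa using (tendsto_pow_atTop_nhds_zero_of_lt_one (r := (1 / 2 : ℝ)) (by norm_num)
        (by norm_num)).const_mul 2
    refine squeeze_zero (fun _ => diam_nonneg) (fun n => ?_) hgeom
    calc diam (K n) ≤ diam (closedBall (b n).center (b n).radius) :=
          diam_mono inter_subset_left isBounded_closedBall
      _ ≤ 2 * (b n).radius := diam_closedBall (b n).radius_pos.le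
      _ ≤ 2 * (1 / 2) ^ n := by linarith [hrad n]
  obtain ⟨x, hx⟩ := nonempty_iInter_of_nonempty_biInter
    (fun n => isClosed_closedBall.inter (hclosed _)) (fun n => isBounded_closedBall.subset inter_subset_left)
    (fun N => ⟨(b N).center, mem_iInter₂.2 fun n hn =>
      hK hn ⟨mem_closedBall_self (b N).radius_pos.le, (b N).center_mem⟩⟩) hdiam
  rw [mem_iInter] at hx
  intro hcover
  obtain ⟨N, hxN⟩ := mem_iUnion.1 (hcover (hx 0).2)
  exact (hnext N (b N)).2.2.2 x (hx (N + 1)) hxN (hS N x hxN)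

end Foran

section Interpolation

variable {E : Type*} [NormedAddCommGroup E] [NormedSpace ℝ E]

noncomputable def intTent (x : ℝ) : ℝ := 1 - 2 * |x - round x|

lemma continuous_intTent : Continuous intTent := by
  have h (x : ℝ) : |x - round x| = ‖(x : UnitAddCircle)‖ := UnitAddCircle.norm_eq.symm
  unfold intTent
  simp_rw [h]
  fun_prop

lemma intTent_intCast (m : ℤ) : intTent m = 1 := by simp [intTent]

lemma abs_intTent_le_one (x : ℝ) : |intTent x| ≤ 1 := by
  have := abs_sub_round x
  rw [intTent, abs_le]
  constructor <;> linarith [abs_nonneg (x - round x)]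

lemma intTent_eq_zero_of_not_lt {x : ℝ} (hx : ¬ |x - round x| < 1 / 2) : intTent x = 0 := by
  rw [intTent, le_antisymm (abs_sub_round x) (not_lt.1 hx)]
  norm_num

lemma round_eventuallyEq {x : ℝ} (hx : |x - round x| < 1 / 2) : ∀ᶠ y in 𝓝 x, round y = round x := by
  rw [abs_lt] at hx
  filter_upwards [Ioo_mem_nhds (a := (round x : ℝ) - 1 / 2) (b := round x + 1 / 2)
    (by linarith) (by linarith)] with y hy
  exact round_eq_iff.2 ⟨hy.1.le, hy.2⟩

lemma tendsto_round_cocompact : Tendsto round (cocompact ℝ) cofinite := by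
  rw [← cocompact_eq_cofinite]
  refine tendsto_cocompact_of_tendsto_dist_comp_atTop 0 ?_
  refine tendsto_atTop_mono (fun x => ?_)
    (tendsto_atTop_add_const_right _ (-(1 / 2)) tendsto_norm_cocompact_atTop)
  rw [Int.dist_eq, Int.cast_zero, sub_zero, Real.norm_eq_abs]
  have := abs_sub_abs_le_abs_sub x (x - round x)
  rw [sub_sub_cancel] at this
  linarith [abs_sub_round x]

lemma exists_zeroAtInfty_eq_on_int (w : ℤ → E) (hw : Tendsto w cofinite (𝓝 0)) :
    ∃ W : C₀(ℝ, E), (∀ m : ℤ, W m = w m) ∧ ∀ x, ‖W x‖ ≤ ‖w (round x)‖ := by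
  set f : ℝ → E := fun x => intTent x • w (round x)
  have hnorm : ∀ x, ‖f x‖ ≤ ‖w (round x)‖ := fun x => by
    rw [norm_smul, Real.norm_eq_abs]
    exact mul_le_of_le_one_left (norm_nonneg _) (abs_intTent_le_one x)
  have hcont : Continuous f := by
    rw [continuous_iff_continuousAt]
    intro x
    by_cases hx : |x - round x| < 1 / 2
    · have hloc : Continuous fun y => intTent y • w (round x) :=
        continuous_intTent.smul continuous_const
      refine hloc.continuousAt.congr ?_
      filter_upwards [round_eventuallyEq hx] with y hy
      simp only [f, hy]
    · have hbdd : IsBoundedUnder (· ≤ ·) (𝓝 x) (norm ∘ fun y => w (round y)) := by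
        obtain ⟨C, hC⟩ := hw.norm.bddAbove_range_of_cofinite
        exact ⟨C, eventually_map.2 (Eventually.of_forall fun y => hC ⟨round y, rfl⟩)⟩
      have h0 : Tendsto intTent (𝓝 x) (𝓝 0) :=
        intTent_eq_zero_of_not_lt hx ▸ continuous_intTent.continuousAt
      rw [ContinuousAt, show f x = 0 by simp [f, intTent_eq_zero_of_not_lt hx]]
      exact h0.zero_smul_isBoundedUnder_le hbdd
  have hzero : Tendsto f (cocompact ℝ) (𝓝 0) :=
    squeeze_zero_norm hnorm (tendsto_zero_iff_norm_tendsto_zero.1 (hw.comp tendsto_round_cocompact))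
  exact ⟨⟨⟨f, hcont⟩, hzero⟩, fun m => by simp [f, intTent_intCast], hnorm⟩

end Interpolation

lemma ZeroAtInftyContinuousMap.exists_dist_le_norm_eq_add (y : C₀(ℝ, ℂ)) {c : ℤ → ℝ} {s : ℝ}
    (hc0 : 0 ≤ c) (hcs : ∀ m, c m ≤ s) (hc : Tendsto c cofinite (𝓝 0)) :
    ∃ z : C₀(ℝ, ℂ), dist z y ≤ s ∧ ∀ m : ℤ, ‖z m‖ = ‖y m‖ + c m := by
  set u : ℤ → ℂ := fun m => Complex.exp (Complex.arg (y m) * Complex.I)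
  have hu : ∀ m, ‖u m‖ = 1 := fun m => Complex.norm_exp_ofReal_mul_I _
  have hw : Tendsto (fun m => (c m : ℂ) * u m) cofinite (𝓝 0) := by
    rw [tendsto_zero_iff_norm_tendsto_zero]
    simpa [hu] using hc.abs
  obtain ⟨W, hWm, hW⟩ := exists_zeroAtInfty_eq_on_int _ hw
  refine ⟨y + W, ?_, fun m => ?_⟩
  · rw [dist_eq_norm, add_sub_cancel_left, ← norm_toBCF_eq_norm]
    refine (BoundedContinuousFunction.norm_le ((hc0 0).trans (hcs 0))).2 fun x => ?_
    calc ‖W x‖ ≤ ‖(c (round x) : ℂ) * u (round x)‖ := hW x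
      _ = c (round x) := by rw [norm_mul, hu, mul_one, Complex.norm_real, Real.norm_of_nonneg (hc0 _)]
      _ ≤ s := hcs _
  · have hzm : (y + W) m = ((‖y m‖ + c m : ℝ) : ℂ) * u m := by
      rw [add_apply, hWm, Complex.ofReal_add, add_mul, Complex.norm_mul_exp_arg_mul_I]
    rw [hzm, norm_mul, hu, mul_one, Complex.norm_real,
      Real.norm_of_nonneg (add_nonneg (norm_nonneg _) (hc0 m))]

lemma ZeroAtInftyContinuousMap.dist_apply_le_dist {α β : Type*} [TopologicalSpace α]
    [PseudoMetricSpace β] [Zero β] (f g : C₀(α, β)) (x : α) : dist (f x) (g x) ≤ dist f g :=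
  BoundedContinuousFunction.dist_coe_le_dist (f := f.toBCF) (g := g.toBCF) x

def marginSet (a : ℤ → ℝ) : Set C₀(ℝ, ℂ) := {f | ∀ m : ℤ, a m ≤ ‖f m‖}

lemma isClosed_marginSet (a : ℤ → ℝ) : IsClosed (marginSet a) := by
  simp only [marginSet, ofPred_forall]
  exact isClosed_iInter fun m => isClosed_le continuous_const
    ((continuous_eval_const (m : ℝ)).comp ZeroAtInftyContinuousMap.isometry_toBCF.continuous).norm

lemma marginSet_anti {a a' : ℤ → ℝ} (h : a ≤ a') : marginSet a' ⊆ marginSet a :=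
  fun _ hf m => (h m).trans (hf m)

lemma exists_mem_marginSet_add {a c : ℤ → ℝ} {s : ℝ} (hc0 : 0 ≤ c) (hcs : ∀ m, c m ≤ s)
    (hc : Tendsto c cofinite (𝓝 0)) {x : C₀(ℝ, ℂ)} (hx : x ∈ marginSet a) :
    ∃ x' ∈ marginSet (a + c), dist x' x ≤ s := by
  obtain ⟨x', hdist, hx'⟩ := x.exists_dist_le_norm_eq_add hc0 hcs hc
  exact ⟨x', fun m => by rw [hx' m, Pi.add_apply]; linarith [hx m], hdist⟩

lemma uniformlyNonporousOn_marginSet {lam : ℝ} (hlam : 0 < lam) {a : ℤ → ℝ} (ha0 : 0 ≤ a)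
    (ha : Tendsto a cofinite (𝓝 0)) (δ : ℝ) :
    UniformlyNonporousOn lam δ (marginSet a) (marginSet (a + fun m => min δ (2 / lam * a m))) := by
  intro f hf y hd hdδ
  set d := dist f y
  set c : ℤ → ℝ := fun m => max 0 (a m - ‖y m‖)
  have hc0 : 0 ≤ c := fun m => le_max_left _ _
  have hca : ∀ m, a m - ‖y m‖ ≤ c m := fun m => le_max_right _ _
  have hcs : ∀ m, c m ≤ lam * d / 2 := by
    intro m
    refine max_le (by positivity) ?_
    by_cases hm : a m ≤ lam * d / 2
    · linarith [norm_nonneg (y m)]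
    · -- at such `m` the margin of `f` exceeds `d`, so `y` still satisfies the margin `a`
      have hmargin : d ≤ min δ (2 / lam * a m) := by
        refine le_min hdδ.le ?_
        rw [div_mul_eq_mul_div, le_div_iff₀ hlam]
        linarith
      have hfm := hf m
      have hfy : ‖f m - y m‖ ≤ d := (dist_eq_norm _ _).symm.trans_le (f.dist_apply_le_dist y m)
      simp only [Pi.add_apply] at hfm
      linarith [norm_sub_norm_le (f m) (y m), mul_pos hlam hd]
  have hc : Tendsto c cofinite (𝓝 0) :=
    squeeze_zero hc0 (fun m => max_le (ha0 m) (by linarith [norm_nonneg (y m)])) ha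
  obtain ⟨z, hzy, hz⟩ := y.exists_dist_le_norm_eq_add hc0 hcs hc
  refine ⟨z, mem_ball.2 (hzy.trans_lt (by linarith [mul_pos hlam hd])), fun m => ?_⟩
  rw [hz m]
  linarith [hca m]

lemma hasNonporousRefinements_marginSet {lam : ℝ} (hlam : 0 < lam) :
    HasNonporousRefinements lam
      fun a : {a : ℤ → ℝ // 0 ≤ a ∧ Tendsto a cofinite (𝓝 0)} => marginSet a := by
  rintro ⟨a, ha0, ha⟩ x hx ε hε
  set c : ℤ → ℝ := fun m => min (ε / 2) (2 / lam * a m)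
  have hc0 : 0 ≤ c := fun m => le_min (by positivity) (mul_nonneg (by positivity) (ha0 m))
  have hc : Tendsto c cofinite (𝓝 0) :=
    squeeze_zero hc0 (fun m => min_le_right _ _) (by simpa using ha.const_mul (2 / lam))
  obtain ⟨x', hx', hdist⟩ := exists_mem_marginSet_add hc0 (fun m => min_le_left _ _) hc hx
  refine ⟨⟨a + c, add_nonneg ha0 hc0, add_zero (0 : ℝ) ▸ ha.add hc⟩,
    marginSet_anti (le_add_of_nonneg_right hc0), ⟨x', hx', by linarith⟩, ε / 2, by positivity,
    uniformlyNonporousOn_marginSet hlam ha0 ha (ε / 2)⟩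

theorem Gamma_not_sigma_porous_general (lam : ℝ) (hlam0 : 0 < lam)
    (g : C₀(ℝ, ℂ)) :
    ¬ IsSigmaPorous lam
      {f : C₀(ℝ, ℂ) | ∀ m : ℤ, ‖g (m : ℝ)‖ ≤ ‖f (m : ℝ)‖} := by
  rintro ⟨S, hS, hcover⟩
  have hg : Tendsto (fun m : ℤ => ‖g m‖) cofinite (𝓝 0) := by
    simpa using (g.zero_at_infty'.comp Int.tendsto_coe_cofinite).norm
  exact not_subset_iUnion_porous hlam0 (hasNonporousRefinements_marginSet hlam0)
    (fun a => isClosed_marginSet a.1) (i₀ := ⟨_, fun _ => norm_nonneg _, hg⟩) (x₀ := g)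
    (fun _ => le_rfl) hS hcover.subset

theorem Gamma_not_sigma_porous (lam : ℝ) (hlam0 : 0 < lam) (hlam : lam ≤ 1 / 2)
    (g : C₀(ℝ, ℂ)) :
    ¬ IsSigmaPorous lam
      {f : C₀(ℝ, ℂ) | ∀ m : ℤ, ‖g (m : ℝ)‖ ≤ ‖f (m : ℝ)‖} :=
  Gamma_not_sigma_porous_general lam hlam0 g
end

section
/- Let 0 < λ ≤ 1/2. Let α be a homeomorphism of ℝ and let w be a continuous positive function on ℝ such that w and w⁻¹ = 1/w are bounded, and consider the weighted composition operator T̃_{α,w} on C₀(ℝ) given by T̃_{α,w}(f) = w·(f∘α). If lim_{n→∞} ∏_{k=1}^{n} (w(α^{−k}(n)))⁻¹ = 0, then the set { f ∈ C₀(ℝ) : ‖T̃_{α,w}ⁿ(f)‖_∞ ≥ 1 for all n ∈ ℕ } is not σ-λ-porous in C₀(ℝ). -/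
open scoped ZeroAtInfty
open Filter Finset

/-!
Evaluating `T ^ n f` at `α⁻ⁿ(n)` gives `‖T ^ n f‖ ≥ |f(n)| ∏_{k=1}^{n} w(α⁻ᵏ(n))`, so the set
contains the closed floor set `{f | u n ≤ |f(n)| for all n}` of the sequence
`u n = ∏_{k=1}^{n} w(α⁻ᵏ(n))⁻¹ → 0`. Relatively open pieces of floor sets form a Foran system:
raising a floor `β` to `β + min (2β/λ) g` cuts out a smaller piece at whose points the original
piece is not λ-porous, because a function at distance `δ` from a point of it lies below `β`
only at integers `n` with `β n < λδ/2`, and is pushed back above `β` by adding there, in the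
direction of its value, spikes of height `≤ λδ/2`. Foran's lemma, a nested-set argument in the
complete space `C₀(ℝ)`, then shows that such a set is not σ-λ-porous.
-/

open Metric Topology

section Foran

variable {X : Type*} [MetricSpace X] {lam : ℝ}

theorem IsPorousAt.of_subset_closure {A B : Set X} {x : X} (h : IsPorousAt lam A x)
    (hBA : B ⊆ closure A) : IsPorousAt lam B x := by
  intro δ hδ
  obtain ⟨y, hy, hyx, hhole⟩ := h δ hδ
  refine ⟨y, hy, hyx, ?_⟩
  rw [← Set.disjoint_iff_inter_eq_empty] at hhole ⊢
  exact (hhole.closure_right isOpen_ball).mono_right hBA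

/-- The hypothesis of Foran's lemma (Zajíček), with the sets `F ∩ ball x r` as the relatively
open pieces of `F`. -/
def IsForanFamily (lam : ℝ) (𝓕 : Set (Set X)) : Prop :=
  ∀ F ∈ 𝓕, ∀ x ∈ F, ∀ r > 0, ∃ F' ∈ 𝓕, F'.Nonempty ∧ closure F' ⊆ F ∩ ball x r ∧
    ∀ y ∈ closure F', ¬ IsPorousAt lam (F ∩ ball x r) y

variable {𝓕 : Set (Set X)}

theorem IsForanFamily.exists_disjoint (h𝓕 : IsForanFamily lam 𝓕) {F : Set X} (hF : F ∈ 𝓕)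
    {x : X} (hx : x ∈ F) {r : ℝ} (hr : 0 < r) {A : Set X} (hA : IsPorous lam A) :
    ∃ F' ∈ 𝓕, F'.Nonempty ∧ closure F' ⊆ F ∩ ball x r ∧ Disjoint (closure F') A := by
  by_cases hdense : F ∩ ball x r ⊆ closure A
  · obtain ⟨F', hF', hne, hsub, hnp⟩ := h𝓕 F hF x hx r hr
    exact ⟨F', hF', hne, hsub, Set.disjoint_left.2 fun y hy hyA =>
      hnp y hy ((hA y hyA).of_subset_closure hdense)⟩
  · obtain ⟨z, ⟨hzF, hzr⟩, hzA⟩ := Set.not_subset.1 hdense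
    obtain ⟨s, hs, hsub⟩ := Metric.isOpen_iff.1
      (isOpen_ball.inter isClosed_closure.isOpen_compl) z ⟨hzr, hzA⟩
    obtain ⟨F', hF', hne, hcl, -⟩ := h𝓕 F hF z hzF s hs
    refine ⟨F', hF', hne, fun y hy => ⟨(hcl hy).1, (hsub (hcl hy).2).1⟩, ?_⟩
    exact Set.disjoint_left.2 fun y hy hyA => (hsub (hcl hy).2).2 (subset_closure hyA)

theorem IsForanFamily.not_subset_iUnion [CompleteSpace X] (h𝓕 : IsForanFamily lam 𝓕)
    {F : Set X} (hF : F ∈ 𝓕) (hne : F.Nonempty) {S : ℕ → Set X}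
    (hS : ∀ n, IsPorous lam (S n)) : ¬ F ⊆ ⋃ n, S n := by
  have step : ∀ (n : ℕ) (p : Set X × X), p.1 ∈ 𝓕 → p.2 ∈ p.1 →
      ∃ q : Set X × X, (q.1 ∈ 𝓕 ∧ q.2 ∈ q.1) ∧
        closure q.1 ⊆ p.1 ∩ ball p.2 ((1 / 2) ^ n) ∧ Disjoint (closure q.1) (S n) := by
    intro n p hp hx
    obtain ⟨F', hF', ⟨x', hx'⟩, hsub, hdisj⟩ :=
      h𝓕.exists_disjoint hp hx (pow_pos one_half_pos n) (hS n)
    exact ⟨(F', x'), ⟨hF', hx'⟩, hsub, hdisj⟩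
  choose! next hnext hnext_sub hnext_disj using step
  obtain ⟨x₀, hx₀⟩ := hne
  let p : ℕ → Set X × X := fun n => Nat.rec (F, x₀) next n
  have hp : ∀ n, (p n).1 ∈ 𝓕 ∧ (p n).2 ∈ (p n).1 := fun n => by
    induction n with
    | zero => exact ⟨hF, hx₀⟩
    | succ n ih => exact hnext n (p n) ih.1 ih.2
  have hsub : ∀ n, closure (p (n + 1)).1 ⊆ (p n).1 ∩ ball (p n).2 ((1 / 2) ^ n) :=
    fun n => hnext_sub n (p n) (hp n).1 (hp n).2
  have hanti : Antitone fun n => (p n).1 :=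
    antitone_nat_of_succ_le fun n => subset_closure.trans ((hsub n).trans Set.inter_subset_left)
  have hcauchy : CauchySeq fun n => (p n).2 := by
    refine cauchySeq_of_le_geometric (1 / 2) 1 one_half_lt_one fun n => ?_
    rw [one_mul, dist_comm]
    exact (mem_ball.1 (hsub n (subset_closure (hp (n + 1)).2)).2).le
  obtain ⟨a, ha⟩ := cauchySeq_tendsto_of_complete hcauchy
  have ha_mem : ∀ n, a ∈ closure (p (n + 1)).1 := fun n =>
    mem_closure_of_tendsto ha ((eventually_ge_atTop (n + 1)).mono fun m hm => hanti hm (hp m).2)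
  intro hcover
  obtain ⟨n, hn⟩ := Set.mem_iUnion.1 (hcover ((hsub 0 (ha_mem 0)).1))
  exact Set.disjoint_left.1 (hnext_disj n (p n) (hp n).1 (hp n).2) (ha_mem n) hn

end Foran

theorem round_eq_of_abs_sub_lt {α : Type*} [Field α] [LinearOrder α] [IsStrictOrderedRing α]
    [FloorRing α] {x : α} {m : ℤ} (h : |x - m| < 1 / 2) : round x = m := by
  rw [round_eq_iff]
  constructor <;> linarith [abs_lt.1 h]

theorem ZeroAtInftyContinuousMap.norm_apply_le_s11 {X E : Type*} [TopologicalSpace X]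
    [SeminormedAddCommGroup E] (f : C₀(X, E)) (x : X) : ‖f x‖ ≤ ‖f‖ :=
  norm_toBCF_eq_norm (f := f) ▸ f.toBCF.norm_coe_le_norm x

section Interpolation

noncomputable def spike (s : ℝ) : ℝ := max 0 (1 - 4 * |s|)

theorem continuous_spike : Continuous spike := by unfold spike; fun_prop

theorem spike_nonneg (s : ℝ) : 0 ≤ spike s := le_max_left _ _

theorem spike_le_one (s : ℝ) : spike s ≤ 1 := max_le zero_le_one (by linarith [abs_nonneg s])

theorem spike_zero : spike 0 = 1 := by norm_num [spike]

theorem spike_eq_zero {s : ℝ} (hs : 1 / 4 ≤ |s|) : spike s = 0 :=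
  max_eq_left (by linarith)

variable {E : Type*} [NormedAddCommGroup E] [NormedSpace ℝ E]

noncomputable def spikeInterpolant (z : ℤ → E) (t : ℝ) : E := spike (t - round t) • z (round t)

theorem spikeInterpolant_intCast (z : ℤ → E) (m : ℤ) : spikeInterpolant z m = z m := by
  simp [spikeInterpolant, round_intCast, spike_zero]

theorem norm_spikeInterpolant_le (z : ℤ → E) (t : ℝ) :
    ‖spikeInterpolant z t‖ ≤ ‖z (round t)‖ := by
  rw [spikeInterpolant, norm_smul, Real.norm_of_nonneg (spike_nonneg _)]
  exact mul_le_of_le_one_left (norm_nonneg _) (spike_le_one _)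

/-- Near `t₀` only the spike at `round t₀` can be nonzero: a point within `1/4` of `t₀` that
rounds elsewhere is at distance `≥ 1/4` from both integers. -/
theorem spikeInterpolant_eventuallyEq (z : ℤ → E) (t₀ : ℝ) :
    spikeInterpolant z =ᶠ[𝓝 t₀] fun t => spike (t - round t₀) • z (round t₀) := by
  filter_upwards [ball_mem_nhds t₀ (by norm_num : (0 : ℝ) < 1 / 4)] with t ht
  rw [mem_ball, Real.dist_eq] at ht
  by_cases hround : round t = round t₀
  · rw [spikeInterpolant, hround]
  have far : ∀ x : ℝ, ∀ m : ℤ, round x ≠ m → 1 / 2 ≤ |x - m| :=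
    fun x m hm => not_lt.1 fun h => hm (round_eq_of_abs_sub_lt h)
  have h₁ := far t (round t₀) hround
  have h₂ := far t₀ (round t) (Ne.symm hround)
  have h₃ := abs_sub_abs_le_abs_sub (t₀ - round t) (t - round t)
  rw [sub_sub_sub_cancel_right] at h₃
  rw [spikeInterpolant, spike_eq_zero (by linarith [abs_sub_comm t₀ t]),
    spike_eq_zero (by linarith), zero_smul, zero_smul]

theorem continuous_spikeInterpolant (z : ℤ → E) : Continuous (spikeInterpolant z) :=
  continuous_iff_continuousAt.2 fun t₀ =>
    ((continuous_spike.comp (continuous_sub_right (round t₀ : ℝ))).smul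
      (continuous_const (y := z (round t₀)))).continuousAt.congr
      (spikeInterpolant_eventuallyEq z t₀).symm

theorem tendsto_round_cocompact_cofinite : Tendsto (round : ℝ → ℤ) (cocompact ℝ) cofinite :=
  le_cofinite_iff_compl_singleton_mem.2 fun m => mem_cocompact.2
    ⟨closedBall m (1 / 2), isCompact_closedBall _ _, fun t ht hround => ht <| by
      rw [mem_closedBall, Real.dist_eq, ← hround]; exact abs_sub_round t⟩

theorem exists_zeroAtInfty_eq_on_int_s11 (z : ℤ → E) (hz : Tendsto z cofinite (𝓝 0)) {B : ℝ}
    (hB : ∀ m, ‖z m‖ ≤ B) : ∃ g : C₀(ℝ, E), (∀ m : ℤ, g m = z m) ∧ ‖g‖ ≤ B := by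
  have hzero : Tendsto (spikeInterpolant z) (cocompact ℝ) (𝓝 0) :=
    squeeze_zero_norm (norm_spikeInterpolant_le z)
      (by simpa using (hz.comp tendsto_round_cocompact_cofinite).norm)
  refine ⟨⟨⟨_, continuous_spikeInterpolant z⟩, hzero⟩, spikeInterpolant_intCast z, ?_⟩
  rw [← ZeroAtInftyContinuousMap.norm_toBCF_eq_norm]
  exact (BoundedContinuousFunction.norm_le ((norm_nonneg _).trans (hB 0))).2 fun t =>
    (norm_spikeInterpolant_le z t).trans (hB _)

theorem exists_zeroAtInfty_eq_on_nat (z : ℕ → E) (hz : Tendsto z atTop (𝓝 0)) {B : ℝ}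
    (hB : ∀ n, ‖z n‖ ≤ B) : ∃ g : C₀(ℝ, E), (∀ n : ℕ, g n = z n) ∧ ‖g‖ ≤ B := by
  let z' : ℤ → E := fun m => if 0 ≤ m then z m.toNat else 0
  have hz' : Tendsto z' cofinite (𝓝 0) := by
    rw [Int.cofinite_eq, tendsto_sup]
    constructor
    · exact tendsto_const_nhds.congr' <| (eventually_lt_atBot 0).mono fun m hm => by
        simp [z', not_le.2 hm]
    · have htoNat : Tendsto Int.toNat atTop atTop :=
        tendsto_atTop_atTop.2 fun n => ⟨n, fun m hm => by omega⟩
      exact (hz.comp htoNat).congr' <| (eventually_ge_atTop 0).mono fun m hm => by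
        simp [z', hm]
  obtain ⟨g, hg, hgB⟩ := exists_zeroAtInfty_eq_on_int_s11 z' hz' fun m => by
    by_cases hm : 0 ≤ m
    · simpa [z', hm] using hB m.toNat
    · simpa [z', hm] using (norm_nonneg _).trans (hB 0)
  exact ⟨g, fun n => by simpa [z'] using hg n, hgB⟩

end Interpolation

def floorSet (β : ℕ → ℝ) : Set C₀(ℝ, ℂ) := {f | ∀ n : ℕ, β n ≤ ‖f n‖}

theorem isClosed_floorSet (β : ℕ → ℝ) : IsClosed (floorSet β) := by
  simp only [floorSet, Set.ofPred_forall]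
  exact isClosed_iInter fun n => isClosed_le continuous_const
    ((continuous_eval_const (n : ℝ)).comp ZeroAtInftyContinuousMap.isometry_toBCF.continuous).norm

theorem exists_mem_floorSet_norm_sub_le {β : ℕ → ℝ} (hβ : Tendsto β atTop (𝓝 0))
    (b : C₀(ℝ, ℂ)) {ε : ℝ} (hε : 0 ≤ ε) (hbε : ∀ n : ℕ, β n - ‖b n‖ ≤ ε) :
    ∃ c ∈ floorSet β, ‖c - b‖ ≤ ε := by
  set r : ℕ → ℝ := fun n => max (β n - ‖b n‖) 0
  set e : ℕ → ℂ := fun n => Complex.exp (Complex.arg (b n) * Complex.I)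
  have hr : ∀ n, 0 ≤ r n := fun n => le_max_right _ _
  have hnorm : ∀ n, ‖(r n : ℂ) * e n‖ = r n := fun n => by
    rw [norm_mul, Complex.norm_exp_ofReal_mul_I, mul_one, Complex.norm_real,
      Real.norm_of_nonneg (hr n)]
  have hz : Tendsto (fun n => (r n : ℂ) * e n) atTop (𝓝 0) := by
    refine squeeze_zero_norm (fun n => (hnorm n).trans_le ?_) (by simpa using hβ.abs)
    exact max_le (by linarith [le_abs_self (β n), norm_nonneg (b n)]) (abs_nonneg _)
  obtain ⟨g, hg, hgε⟩ := exists_zeroAtInfty_eq_on_nat _ hz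
    fun n => (hnorm n).trans_le (max_le (hbε n) hε)
  refine ⟨b + g, fun n => ?_, by simpa using hgε⟩
  have hsum : (b + g) n = ((‖b n‖ + r n : ℝ) : ℂ) * e n := by
    rw [ZeroAtInftyContinuousMap.add_apply, hg]
    push_cast
    linear_combination -Complex.norm_mul_exp_arg_mul_I (b n)
  rw [hsum, norm_mul, Complex.norm_exp_ofReal_mul_I, mul_one, Complex.norm_real,
    Real.norm_of_nonneg (add_nonneg (norm_nonneg _) (hr n))]
  linarith [le_max_left (β n - ‖b n‖) 0]

theorem floorSet_nonempty {β : ℕ → ℝ} (hβ : Tendsto β atTop (𝓝 0)) : (floorSet β).Nonempty := by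
  obtain ⟨C, hC⟩ := hβ.bddAbove_range
  obtain ⟨c, hc, -⟩ := exists_mem_floorSet_norm_sub_le hβ 0 (le_max_right C 0) fun n => by
    simpa using (hC (Set.mem_range_self n)).trans (le_max_left C 0)
  exact ⟨c, hc⟩

theorem not_isPorousAt_floorSet_inter {lam g : ℝ} (hlam : 0 < lam) (hg : 0 < g) {β : ℕ → ℝ}
    (hβ : Tendsto β atTop (𝓝 0)) {U : Set C₀(ℝ, ℂ)} (hU : IsOpen U) {x : C₀(ℝ, ℂ)}
    (hx : x ∈ floorSet fun n => β n + min (2 / lam * β n) g) (hxU : x ∈ U) :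
    ¬ IsPorousAt lam (floorSet β ∩ U) x := by
  obtain ⟨ε, hε, hball⟩ := Metric.isOpen_iff.1 hU x hxU
  intro hpor
  obtain ⟨y, hy, hyx, hhole⟩ := hpor (min g (ε / (1 + lam))) (by positivity)
  set d := dist x y
  have hd : 0 < d := dist_pos.2 hyx.symm
  have hdδ : d < min g (ε / (1 + lam)) := (dist_comm x y).trans_lt (mem_ball.1 hy)
  have hdg : d < g := hdδ.trans_le (min_le_left _ _)
  have hdε : (1 + lam) * d < ε := by
    have := hdδ.trans_le (min_le_right _ _)
    rwa [lt_div_iff₀ (by positivity), mul_comm] at this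
  have hdeficit : ∀ n : ℕ, β n - ‖y n‖ ≤ lam * d / 2 := by
    intro n
    have hxy : ‖x n‖ - ‖y n‖ ≤ d :=
      (norm_sub_norm_le _ _).trans (((x - y).norm_apply_le_s11 n).trans_eq (dist_eq_norm x y).symm)
    have hxn := hx n
    rcases le_or_gt d (min (2 / lam * β n) g) with h | h
    · linarith [mul_pos hlam hd]
    · have hβn : 2 / lam * β n < d := (min_lt_iff.1 h).resolve_right (not_lt.2 hdg.le)
      rw [div_mul_eq_mul_div, div_lt_iff₀ hlam] at hβn
      linarith [norm_nonneg (y n)]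
  obtain ⟨v, hv, hvy⟩ := exists_mem_floorSet_norm_sub_le hβ y (by positivity) hdeficit
  have hvy' : dist v y < lam * d := by rw [dist_eq_norm]; linarith [mul_pos hlam hd]
  have hvU : v ∈ U := hball <| mem_ball.2 <| by
    linarith [dist_triangle v y x, dist_comm x y]
  exact Set.eq_empty_iff_forall_notMem.1 hhole v ⟨mem_ball.2 hvy', hv, hvU⟩

def floorCells : Set (Set C₀(ℝ, ℂ)) :=
  {F | ∃ β : ℕ → ℝ, 0 ≤ β ∧ Tendsto β atTop (𝓝 0) ∧ ∃ U, IsOpen U ∧ F = floorSet β ∩ U}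

theorem isForanFamily_floorCells {lam : ℝ} (hlam : 0 < lam) : IsForanFamily lam floorCells := by
  rintro _ ⟨β, hβ0, hβ, U, hU, rfl⟩ x ⟨hxβ, hxU⟩ r hr
  obtain ⟨s, hs, hsub⟩ := Metric.isOpen_iff.1 (hU.inter isOpen_ball) x ⟨hxU, mem_ball_self hr⟩
  set β' : ℕ → ℝ := fun n => β n + min (2 / lam * β n) (s / 4)
  have hgap : ∀ n, 0 ≤ min (2 / lam * β n) (s / 4) := fun n =>
    le_min (mul_nonneg (by positivity) (hβ0 n)) (by positivity)
  have hβ' : Tendsto β' atTop (𝓝 0) := by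
    refine squeeze_zero (fun n => add_nonneg (hβ0 n) (hgap n)) (fun n => ?_)
      (by simpa using hβ.const_mul (1 + 2 / lam))
    linarith [min_le_left (2 / lam * β n) (s / 4)]
  obtain ⟨c, hc, hcx⟩ := exists_mem_floorSet_norm_sub_le hβ' x (ε := s / 4) (by positivity)
    fun n => by linarith [hxβ n, min_le_right (2 / lam * β n) (s / 4)]
  have hcl : closure (floorSet β' ∩ ball c (s / 4)) ⊆ floorSet β' ∩ closedBall c (s / 4) :=
    closure_minimal (Set.inter_subset_inter_right _ ball_subset_closedBall)
      ((isClosed_floorSet β').inter isClosed_closedBall)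
  have hsub' : floorSet β' ∩ closedBall c (s / 4) ⊆ floorSet β ∩ U ∩ ball x r := by
    rintro y ⟨hyβ', hyc⟩
    have hyx : y ∈ ball x s := mem_ball.2 <| by
      linarith [dist_triangle y c x, mem_closedBall.1 hyc, dist_eq_norm c x]
    exact ⟨⟨fun n => (le_add_of_nonneg_right (hgap n)).trans (hyβ' n), (hsub hyx).1⟩,
      (hsub hyx).2⟩
  refine ⟨floorSet β' ∩ ball c (s / 4),
    ⟨β', fun n => add_nonneg (hβ0 n) (hgap n), hβ', _, isOpen_ball, rfl⟩,
    ⟨c, hc, mem_ball_self (by positivity)⟩, hcl.trans hsub', fun y hy => ?_⟩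
  have hy' := hsub' (hcl hy)
  rw [Set.inter_assoc]
  exact not_isPorousAt_floorSet_inter hlam (by positivity) hβ (hU.inter isOpen_ball) (hcl hy).1
    ⟨hy'.1.2, hy'.2⟩

theorem pow_apply_symm_iterate {X : Type*} [TopologicalSpace X] {α : X ≃ₜ X} {w : X → ℝ}
    {T : C₀(X, ℂ) →L[ℂ] C₀(X, ℂ)} (hT : ∀ (f : C₀(X, ℂ)) (t : X), T f t = (w t : ℂ) * f (α t))
    (n : ℕ) (f : C₀(X, ℂ)) (s : X) :
    (T ^ n) f ((⇑α.symm)^[n] s) = (∏ k ∈ range n, (w ((⇑α.symm)^[k + 1] s) : ℂ)) * f s := by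
  induction n with
  | zero => simp
  | succ n ih =>
    rw [pow_succ', mul_apply_eq_comp, hT, Function.iterate_succ_apply',
      α.apply_symm_apply, ih, prod_range_succ, Function.iterate_succ_apply']
    ring

theorem one_le_norm_pow_apply {α : ℝ ≃ₜ ℝ} {w : ℝ → ℝ} (hw : ∀ t, 0 < w t)
    {T : C₀(ℝ, ℂ) →L[ℂ] C₀(ℝ, ℂ)} (hT : ∀ (f : C₀(ℝ, ℂ)) (t : ℝ), T f t = (w t : ℂ) * f (α t))
    {f : C₀(ℝ, ℂ)} (hf : f ∈ floorSet fun n => ∏ k ∈ Icc 1 n, (w ((⇑α.symm)^[k] (n : ℝ)))⁻¹)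
    (n : ℕ) : 1 ≤ ‖(T ^ n) f‖ := by
  set P := ∏ k ∈ range n, w ((⇑α.symm)^[k + 1] (n : ℝ))
  have hP : 0 < P := prod_pos fun k _ => hw _
  have hfn : P⁻¹ ≤ ‖f n‖ := by
    have := hf n
    dsimp only at this
    rw [← Ico_add_one_right_eq_Icc, prod_Ico_eq_prod_range, Nat.add_sub_cancel,
      prod_inv_distrib] at this
    simpa only [add_comm 1] using this
  calc 1 = P * P⁻¹ := (mul_inv_cancel₀ hP.ne').symm
    _ ≤ P * ‖f n‖ := by gcongr
    _ = ‖(T ^ n) f ((⇑α.symm)^[n] n)‖ := by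
      rw [pow_apply_symm_iterate hT, norm_mul, norm_prod]
      simp [P, abs_of_pos (hw _)]
    _ ≤ ‖(T ^ n) f‖ := ZeroAtInftyContinuousMap.norm_apply_le_s11 _ _

theorem norm_ge_one_set_not_sigma_porous_general
    (lam : ℝ) (hlam0 : 0 < lam)
    (α : ℝ ≃ₜ ℝ)
    (w : ℝ → ℝ) (hw_pos : ∀ t, 0 < w t)
    (T : C₀(ℝ, ℂ) →L[ℂ] C₀(ℝ, ℂ))
    (hT : ∀ (f : C₀(ℝ, ℂ)) (t : ℝ), T f t = (w t : ℂ) * f (α t))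
    (hlim : Tendsto
      (fun n : ℕ => ∏ k ∈ Icc 1 n, (w ((⇑α.symm)^[k] (n : ℝ)))⁻¹) atTop (nhds 0)) :
    ¬ IsSigmaPorous lam
      {f : C₀(ℝ, ℂ) | ∀ n : ℕ, 1 ≤ n → 1 ≤ ‖(T ^ n) f‖} := by
  rintro ⟨S, hS, hE⟩
  set u : ℕ → ℝ := fun n => ∏ k ∈ Icc 1 n, (w ((⇑α.symm)^[k] (n : ℝ)))⁻¹
  have hcell : floorSet u ∈ floorCells :=
    ⟨u, fun n => prod_nonneg fun k _ => (inv_pos.2 (hw_pos _)).le, hlim, Set.univ, isOpen_univ,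
      (Set.inter_univ _).symm⟩
  refine (isForanFamily_floorCells hlam0).not_subset_iUnion hcell (floorSet_nonempty hlim) hS ?_
  rw [← hE]
  exact fun f hf n _ => one_le_norm_pow_apply hw_pos hT hf n

theorem norm_ge_one_set_not_sigma_porous
    (lam : ℝ) (hlam0 : 0 < lam) (hlam : lam ≤ 1 / 2)
    (α : ℝ ≃ₜ ℝ)
    (w : ℝ → ℝ) (hw_cont : Continuous w) (hw_pos : ∀ t, 0 < w t)
    (hw_bdd : ∃ C, ∀ t, w t ≤ C) (hw_inv_bdd : ∃ C, ∀ t, (w t)⁻¹ ≤ C)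
    (T : C₀(ℝ, ℂ) →L[ℂ] C₀(ℝ, ℂ))
    (hT : ∀ (f : C₀(ℝ, ℂ)) (t : ℝ), T f t = (w t : ℂ) * f (α t))
    (hlim : Tendsto
      (fun n : ℕ => ∏ k ∈ Icc 1 n, (w ((⇑α.symm)^[k] (n : ℝ)))⁻¹) atTop (nhds 0)) :
    ¬ IsSigmaPorous lam
      {f : C₀(ℝ, ℂ) | ∀ n : ℕ, 1 ≤ n → 1 ≤ ‖(T ^ n) f‖} :=
  norm_ge_one_set_not_sigma_porous_general lam hlam0 α w hw_pos T hT hlim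
end

section
/- Let M and δ be positive constants with M ≥ 2 + 2δ and δ ≥ 1, let α : ℝ → ℝ be given by α(t) = t − 1, and let w : ℝ → ℝ be defined by w(t) = M for t ≤ −1, w(t) = M + ((t+1)/2)(1 + δ − M) for t ∈ [−1, 1], and w(t) = 1 + δ for t ≥ 1. Then the weighted composition operator T̃_{α,w} on C₀(ℝ), defined by T̃_{α,w}(f) = w·(f∘α), and its inverse S̃_{α,w}, given by S̃_{α,w}(f) = (w∘α⁻¹)⁻¹·(f∘α⁻¹), are both topologically semi-transitive on C₀(ℝ), but neither T̃_{α,w} nor S̃_{α,w} is topologically Cesàro hyper-transitive on C₀(ℝ). -/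
/-!
On functions vanishing on `(-∞, 0)` the operator `T` is a shift followed by multiplication by
`1 + δ`, and on functions vanishing on `(-1, ∞)` the operator `S` is a shift followed by
multiplication by `M⁻¹`; finitely many iterations move any compactly supported function into
these subspaces. So `‖Tⁿ x‖ ‖Sⁿ y‖` decays like `((1 + δ) / M)ⁿ` for compactly supported `x, y`,
which are dense in `C₀(ℝ, ℂ)`, and this yields semi-transitivity of both `T` and `S = T⁻¹`.
On the other hand `w ≥ 1 + δ ≥ 2`, so `‖S‖ ≤ 1/2`: the Cesàro means `n⁻¹ Sⁿ` never enlarge a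
vector while `n⁻¹ Tⁿ` enlarge every vector by at least `2ⁿ / n ≥ 1`, which rules out Cesàro
hyper-transitivity for both.
-/

open scoped ZeroAtInfty

/-- A bounded linear operator `T` on a complex normed space is *topologically Cesàro
hyper-transitive* if for every pair of nonempty open subsets `O₁, O₂` there exists a
strictly increasing sequence `(n_k)` of (positive) natural numbers such that
`n_k⁻¹ • T^{n_k}(O₁) ∩ O₂ ≠ ∅` for all `k`. -/
def IsCesaroHyperTransitive {E : Type*} [NormedAddCommGroup E] [NormedSpace ℂ E]
    (T : E →L[ℂ] E) : Prop :=
  ∀ O₁ O₂ : Set E, IsOpen O₁ → IsOpen O₂ → O₁.Nonempty → O₂.Nonempty →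
    ∃ n : ℕ → ℕ, StrictMono n ∧ (∀ k, 1 ≤ n k) ∧
      ∀ k, ∃ f ∈ O₁, ((n k : ℂ))⁻¹ • (T ^ n k) f ∈ O₂

open Filter Set Topology

namespace ZeroAtInftyContinuousMap

section Norm

variable {α β : Type*} [TopologicalSpace α] [SeminormedAddCommGroup β]

theorem norm_coe_le_norm (f : C₀(α, β)) (x : α) : ‖f x‖ ≤ ‖f‖ := by
  rw [← norm_toBCF_eq_norm]
  exact f.toBCF.norm_coe_le_norm x

theorem norm_le {f : C₀(α, β)} {C : ℝ} (hC : 0 ≤ C) : ‖f‖ ≤ C ↔ ∀ x, ‖f x‖ ≤ C := by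
  rw [← norm_toBCF_eq_norm]
  exact BoundedContinuousFunction.norm_le hC

end Norm

section CompactSupport

variable {E F : Type*} [NormedAddCommGroup E] [NormedSpace ℝ E] [FiniteDimensional ℝ E]
  [NormedAddCommGroup F] [NormedSpace ℝ F]

noncomputable def bumpSMul {c : E} (χ : ContDiffBump c) (f : C(E, F)) : C₀(E, F) where
  toFun t := χ t • f t
  continuous_toFun := χ.continuous.smul f.continuous
  zero_at_infty' := χ.hasCompactSupport.smul_right.is_zero_at_infty

@[simp]
theorem bumpSMul_apply {c : E} (χ : ContDiffBump c) (f : C(E, F)) (t : E) :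
    bumpSMul χ f t = χ t • f t :=
  rfl

theorem hasCompactSupport_bumpSMul {c : E} (χ : ContDiffBump c) (f : C(E, F)) :
    HasCompactSupport (bumpSMul χ f) :=
  χ.hasCompactSupport.smul_right

instance [Nontrivial F] : Nontrivial C₀(E, F) := by
  obtain ⟨v, hv⟩ := exists_ne (0 : F)
  let χ : ContDiffBump (0 : E) := ⟨1, 2, one_pos, one_lt_two⟩
  refine ⟨bumpSMul χ (ContinuousMap.const E v), 0, fun h => hv ?_⟩
  have h0 := DFunLike.congr_fun h 0
  rwa [bumpSMul_apply, χ.one_of_mem_closedBall (Metric.mem_closedBall_self zero_le_one),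
    one_smul, ContinuousMap.const_apply, zero_apply] at h0

theorem dense_setOf_hasCompactSupport : Dense {f : C₀(E, F) | HasCompactSupport f} := by
  refine Metric.dense_iff.2 fun f ε hε => ?_
  obtain ⟨r, hr⟩ := ZeroAtInftyContinuousMapClass.norm_le f (ε / 2) (half_pos hε)
  let χ : ContDiffBump (0 : E) := ⟨max r 1, max r 1 + 1, by positivity, by linarith⟩
  refine ⟨bumpSMul χ f.toContinuousMap, ?_, hasCompactSupport_bumpSMul χ _⟩
  rw [Metric.mem_ball, dist_comm, dist_eq_norm]
  refine ((norm_le (half_pos hε).le).2 fun t => ?_).trans_lt (half_lt_self hε)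
  have hχ : 0 ≤ 1 - χ t := sub_nonneg.2 χ.le_one
  have hdiff : (f - bumpSMul χ f.toContinuousMap) t = (1 - χ t) • f t := by simp [sub_smul]
  rw [hdiff, norm_smul, Real.norm_of_nonneg hχ]
  rcases le_or_gt ‖t‖ (max r 1) with ht | ht
  · rw [χ.one_of_mem_closedBall (mem_closedBall_zero_iff.2 ht), sub_self, zero_mul]
    exact (half_pos hε).le
  · calc (1 - χ t) * ‖f t‖ ≤ 1 * ‖f t‖ := by gcongr; linarith [χ.nonneg (x := t)]
      _ ≤ ε / 2 := by rw [one_mul]; exact (hr t (lt_of_le_of_lt (le_max_left r 1) ht)).le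

end CompactSupport

end ZeroAtInftyContinuousMap

theorem HasCompactSupport.exists_eqOn_zero_Iio_Ioi {β : Type*} [Zero β] {f : ℝ → β}
    (hf : HasCompactSupport f) : ∃ a b, EqOn f 0 (Iio a) ∧ EqOn f 0 (Ioi b) := by
  obtain ⟨a, ha⟩ := hf.isCompact.isBounded.bddBelow
  obtain ⟨b, hb⟩ := hf.isCompact.isBounded.bddAbove
  exact ⟨a, b, fun t ht => image_eq_zero_of_notMem_tsupport fun h => (ha h).not_gt ht,
    fun t ht => image_eq_zero_of_notMem_tsupport fun h => (hb h).not_gt ht⟩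

theorem exists_pos_lt_mul_and_mul_lt {a b ε₁ ε₂ : ℝ} (ha : 0 ≤ a) (hb : 0 ≤ b) (hε₁ : 0 < ε₁)
    (hε₂ : 0 < ε₂) (h : a * b < ε₁ * ε₂) : ∃ r > 0, b < ε₁ * r ∧ r * a < ε₂ := by
  rcases ha.eq_or_lt with rfl | ha
  · refine ⟨b / ε₁ + 1, by positivity, ?_, by simpa using hε₂⟩
    rw [mul_add, mul_div_cancel₀ _ hε₁.ne']
    linarith
  · obtain ⟨r, hr₁, hr₂⟩ :=
      exists_between (show b / ε₁ < ε₂ / a by rw [div_lt_div_iff₀ hε₁ ha]; linarith)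
    exact ⟨r, (div_nonneg hb hε₁.le).trans_lt hr₁, (div_lt_iff₀' hε₁).1 hr₁, (lt_div_iff₀ ha).1 hr₂⟩

section Operators

variable {E : Type*} [NormedAddCommGroup E] [NormedSpace ℂ E]

theorem ContinuousLinearMap.pow_apply_pow_apply_of_leftInverse {A B : E →L[ℂ] E}
    (hAB : ∀ x, A (B x) = x) (n : ℕ) (x : E) : (A ^ n) ((B ^ n) x) = x := by
  rw [pow_apply_eq_iterate, pow_apply_eq_iterate]
  exact Function.LeftInverse.iterate hAB n x

theorem ContinuousLinearMap.norm_pow_apply_le_of_mapsTo {A : E →L[ℂ] E} {P : Set E} {c : ℝ}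
    (hc : 0 ≤ c) (hP : MapsTo A P P) (hA : ∀ x ∈ P, ‖A x‖ ≤ c * ‖x‖) (n : ℕ) :
    ∀ x ∈ P, ‖(A ^ n) x‖ ≤ c ^ n * ‖x‖ := by
  induction n with
  | zero => simp
  | succ n ih =>
    intro x hx
    rw [pow_succ, mul_apply_eq_comp]
    calc ‖(A ^ n) (A x)‖ ≤ c ^ n * ‖A x‖ := ih _ (hP hx)
      _ ≤ c ^ n * (c * ‖x‖) := by gcongr; exact hA x hx
      _ = c ^ (n + 1) * ‖x‖ := by ring

theorem ContinuousLinearMap.norm_pow_apply_le {A : E →L[ℂ] E} {c : ℝ} (hc : 0 ≤ c)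
    (hA : ∀ x, ‖A x‖ ≤ c * ‖x‖) (n : ℕ) (x : E) : ‖(A ^ n) x‖ ≤ c ^ n * ‖x‖ :=
  norm_pow_apply_le_of_mapsTo hc (mapsTo_univ _ _) (fun x _ => hA x) n x (mem_univ x)

/-- Once `‖Aⁿ x‖ ‖Bⁿ y‖ → 0` on a dense set, a small perturbation `x + λ⁻¹ Bⁿ y` of `x` is sent
by `λ Aⁿ` close to `y`, for a suitable `λ > 0` balancing the two errors. -/
theorem isSemiTransitive_of_tendsto {A B : E →L[ℂ] E} (hAB : ∀ x, A (B x) = x) {D : Set E}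
    (hD : Dense D)
    (h : ∀ x ∈ D, ∀ y ∈ D, Tendsto (fun n => ‖(A ^ n) x‖ * ‖(B ^ n) y‖) atTop (𝓝 0)) :
    IsSemiTransitive A := by
  intro O₁ O₂ hO₁ hO₂ hne₁ hne₂
  obtain ⟨x, hxO, hxD⟩ := hD.inter_open_nonempty O₁ hO₁ hne₁
  obtain ⟨y, hyO, hyD⟩ := hD.inter_open_nonempty O₂ hO₂ hne₂
  obtain ⟨ε₁, hε₁, hx⟩ := Metric.isOpen_iff.1 hO₁ x hxO
  obtain ⟨ε₂, hε₂, hy⟩ := Metric.isOpen_iff.1 hO₂ y hyO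
  obtain ⟨n, hn, hn1⟩ := (((h x hxD y hyD).eventually
    (gt_mem_nhds (mul_pos hε₁ hε₂))).and (eventually_ge_atTop 1)).exists
  obtain ⟨r, hr, hr₁, hr₂⟩ :=
    exists_pos_lt_mul_and_mul_lt (norm_nonneg _) (norm_nonneg _) hε₁ hε₂ hn
  have hr' : (r : ℂ) ≠ 0 := Complex.ofReal_ne_zero.2 hr.ne'
  refine ⟨n, r, hn1, hr', x + (r : ℂ)⁻¹ • (B ^ n) y, hx ?_, hy ?_⟩
  · rw [Metric.mem_ball, dist_eq_norm, add_sub_cancel_left, norm_smul, norm_inv,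
      Complex.norm_real, Real.norm_of_nonneg hr.le, inv_mul_lt_iff₀ hr]
    linarith
  · rw [Metric.mem_ball, dist_eq_norm, map_add, map_smul,
      ContinuousLinearMap.pow_apply_pow_apply_of_leftInverse hAB, smul_add, smul_smul,
      mul_inv_cancel₀ hr', one_smul, add_sub_cancel_right, norm_smul, Complex.norm_real,
      Real.norm_of_nonneg hr.le]
    exact hr₂

theorem not_isCesaroHyperTransitive_of_norm_apply_le [Nontrivial E] {A : E →L[ℂ] E}
    (hA : ∀ x, ‖A x‖ ≤ ‖x‖) : ¬ IsCesaroHyperTransitive A := by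
  intro h
  obtain ⟨n, -, hn1, hn⟩ := h (Metric.ball 0 1) {y | 1 < ‖y‖} Metric.isOpen_ball
    (isOpen_lt continuous_const continuous_norm) ⟨0, Metric.mem_ball_self one_pos⟩
    (NormedSpace.exists_lt_norm ℂ E 1)
  obtain ⟨x, hx, hy⟩ := hn 0
  have hpow : ‖(A ^ n 0) x‖ ≤ ‖x‖ := by
    simpa using ContinuousLinearMap.norm_pow_apply_le zero_le_one (by simpa using hA) (n 0) x
  have hscale : ‖((n 0 : ℂ))⁻¹ • (A ^ n 0) x‖ ≤ ‖(A ^ n 0) x‖ := by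
    rw [norm_smul, norm_inv, Complex.norm_natCast]
    exact mul_le_of_le_one_left (norm_nonneg _) (inv_le_one_of_one_le₀ (by exact_mod_cast hn1 0))
  have hy : 1 < ‖_‖ := hy
  rw [mem_ball_zero_iff] at hx
  linarith

theorem not_isCesaroHyperTransitive_of_leftInverse [Nontrivial E] {A B : E →L[ℂ] E}
    (hBA : ∀ x, B (A x) = x) (hB : ∀ x, ‖B x‖ ≤ 2⁻¹ * ‖x‖) : ¬ IsCesaroHyperTransitive A := by
  intro h
  obtain ⟨n, -, hn1, hn⟩ := h {x | 1 < ‖x‖} (Metric.ball 0 1)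
    (isOpen_lt continuous_const continuous_norm) Metric.isOpen_ball
    (NormedSpace.exists_lt_norm ℂ E 1) ⟨0, Metric.mem_ball_self one_pos⟩
  obtain ⟨x, hx, hy⟩ := hn 0
  set m := n 0
  have hm : (0 : ℝ) < m := by exact_mod_cast hn1 0
  have hx_le : ‖x‖ ≤ (2⁻¹) ^ m * ‖(A ^ m) x‖ := by
    calc ‖x‖ = ‖(B ^ m) ((A ^ m) x)‖ := by
          rw [ContinuousLinearMap.pow_apply_pow_apply_of_leftInverse hBA]
      _ ≤ _ := ContinuousLinearMap.norm_pow_apply_le (by norm_num) hB m _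
  have hAx : ‖(A ^ m) x‖ < m := by
    rw [mem_ball_zero_iff, norm_smul, norm_inv, Complex.norm_natCast, inv_mul_lt_iff₀ hm,
      mul_one] at hy
    exact hy
  have hm2 : (m : ℝ) ≤ 2 ^ m := by exact_mod_cast Nat.lt_two_pow_self.le
  have : (2⁻¹ : ℝ) ^ m * ‖(A ^ m) x‖ ≤ 1 := by
    calc (2⁻¹ : ℝ) ^ m * ‖(A ^ m) x‖ ≤ (2⁻¹) ^ m * 2 ^ m := by gcongr; linarith
      _ = 1 := by rw [← mul_pow]; norm_num
  have hx : 1 < ‖x‖ := hx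
  linarith

end Operators

section WeightedShifts

variable {w : ℝ → ℝ} {T S : C₀(ℝ, ℂ) →L[ℂ] C₀(ℝ, ℂ)}

theorem eqOn_zero_Iio_pow_apply (hT : ∀ (f : C₀(ℝ, ℂ)) (t : ℝ), T f t = (w t : ℂ) * f (t - 1))
    {x : C₀(ℝ, ℂ)} {a : ℝ} (hx : EqOn x 0 (Iio a)) (n : ℕ) :
    EqOn ((T ^ n) x) 0 (Iio (a + n)) := by
  induction n with
  | zero => simpa using hx
  | succ n ih =>
    intro t ht
    rw [mem_Iio, Nat.cast_succ] at ht
    rw [pow_succ', mul_apply_eq_comp, hT, ih (show t - 1 < a + n by linarith)]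
    simp

theorem eqOn_zero_Ioi_pow_apply
    (hS : ∀ (f : C₀(ℝ, ℂ)) (t : ℝ), S f t = ((w (t + 1) : ℂ))⁻¹ * f (t + 1))
    {y : C₀(ℝ, ℂ)} {b : ℝ} (hy : EqOn y 0 (Ioi b)) (n : ℕ) :
    EqOn ((S ^ n) y) 0 (Ioi (b - n)) := by
  induction n with
  | zero => simpa using hy
  | succ n ih =>
    intro t ht
    rw [mem_Ioi, Nat.cast_succ] at ht
    rw [pow_succ', mul_apply_eq_comp, hS, ih (show b - n < t + 1 by linarith)]
    simp

theorem norm_apply_le_of_eqOn_zero_Iio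
    (hT : ∀ (f : C₀(ℝ, ℂ)) (t : ℝ), T f t = (w t : ℂ) * f (t - 1)) {c : ℝ}
    (hw : ∀ t ≥ 1, |w t| ≤ c) {x : C₀(ℝ, ℂ)} (hx : EqOn x 0 (Iio 0)) :
    ‖T x‖ ≤ c * ‖x‖ := by
  have hc : 0 ≤ c := (abs_nonneg _).trans (hw 1 le_rfl)
  refine (ZeroAtInftyContinuousMap.norm_le (by positivity)).2 fun t => ?_
  rw [hT]
  rcases lt_or_ge t 1 with ht | ht
  · rw [hx (show t - 1 < 0 by linarith)]
    simp only [Pi.zero_apply, mul_zero, norm_zero]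
    positivity
  · rw [norm_mul, Complex.norm_real, Real.norm_eq_abs]
    exact mul_le_mul (hw t ht) (ZeroAtInftyContinuousMap.norm_coe_le_norm _ _) (norm_nonneg _) hc

theorem norm_apply_le_of_eqOn_zero_compl
    (hS : ∀ (f : C₀(ℝ, ℂ)) (t : ℝ), S f t = ((w (t + 1) : ℂ))⁻¹ * f (t + 1)) {c : ℝ}
    (hc : 0 < c) {s : Set ℝ} (hw : ∀ t ∈ s, c ≤ |w t|) {y : C₀(ℝ, ℂ)} (hy : EqOn y 0 sᶜ) :
    ‖S y‖ ≤ c⁻¹ * ‖y‖ := by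
  refine (ZeroAtInftyContinuousMap.norm_le (by positivity)).2 fun t => ?_
  rw [hS]
  by_cases ht : t + 1 ∈ s
  · rw [norm_mul, norm_inv, Complex.norm_real, Real.norm_eq_abs]
    exact mul_le_mul (inv_anti₀ hc (hw _ ht)) (ZeroAtInftyContinuousMap.norm_coe_le_norm _ _)
      (norm_nonneg _) (by positivity)
  · rw [hy ht]
    simp only [Pi.zero_apply, mul_zero, norm_zero]
    positivity

theorem tendsto_norm_pow_mul_norm_pow
    (hT : ∀ (f : C₀(ℝ, ℂ)) (t : ℝ), T f t = (w t : ℂ) * f (t - 1))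
    (hS : ∀ (f : C₀(ℝ, ℂ)) (t : ℝ), S f t = ((w (t + 1) : ℂ))⁻¹ * f (t + 1))
    {c C : ℝ} (hc : 0 ≤ c) (hcC : c < C) (hwr : ∀ t ≥ 1, w t = c) (hwl : ∀ t ≤ -1, w t = C)
    {x y : C₀(ℝ, ℂ)} (hx : HasCompactSupport x) (hy : HasCompactSupport y) :
    Tendsto (fun n => ‖(T ^ n) x‖ * ‖(S ^ n) y‖) atTop (𝓝 0) := by
  have hC : 0 < C := hc.trans_lt hcC
  obtain ⟨a, -, hxa, -⟩ := hx.exists_eqOn_zero_Iio_Ioi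
  obtain ⟨-, b, -, hyb⟩ := hy.exists_eqOn_zero_Iio_Ioi
  obtain ⟨N, hN⟩ := exists_nat_ge (max (-a) (b + 1))
  set P : Set C₀(ℝ, ℂ) := {f | EqOn f 0 (Iio 0)}
  set Q : Set C₀(ℝ, ℂ) := {f | EqOn f 0 (Ioi (-1))}
  have hP : MapsTo T P P := fun f hf =>
    (eqOn_zero_Iio_pow_apply hT hf 1).mono (Iio_subset_Iio (by simp))
  have hQ : MapsTo S Q Q := fun f hf =>
    (eqOn_zero_Ioi_pow_apply hS hf 1).mono (Ioi_subset_Ioi (by simp))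
  have hTn := ContinuousLinearMap.norm_pow_apply_le_of_mapsTo hc hP fun f hf =>
    norm_apply_le_of_eqOn_zero_Iio hT (fun t ht => by rw [hwr t ht, abs_of_nonneg hc]) hf
  have hSn := ContinuousLinearMap.norm_pow_apply_le_of_mapsTo (inv_nonneg.2 hC.le) hQ fun f hf =>
    norm_apply_le_of_eqOn_zero_compl hS hC (s := Iic (-1))
      (fun t ht => by rw [hwl t ht, abs_of_pos hC]) (by rwa [compl_Iic])
  have hxN : (T ^ N) x ∈ P :=
    (eqOn_zero_Iio_pow_apply hT hxa N).mono
      (Iio_subset_Iio (by linarith [le_max_left (-a) (b + 1)]))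
  have hyN : (S ^ N) y ∈ Q :=
    (eqOn_zero_Ioi_pow_apply hS hyb N).mono
      (Ioi_subset_Ioi (by linarith [le_max_right (-a) (b + 1)]))
  have hbound : ∀ n, ‖(T ^ (n + N)) x‖ * ‖(S ^ (n + N)) y‖ ≤
      (c * C⁻¹) ^ n * (‖(T ^ N) x‖ * ‖(S ^ N) y‖) := fun n => by
    rw [pow_add, pow_add, mul_apply_eq_comp, mul_apply_eq_comp, mul_pow]
    calc _ ≤ (c ^ n * ‖(T ^ N) x‖) * (C⁻¹ ^ n * ‖(S ^ N) y‖) :=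
          mul_le_mul (hTn n _ hxN) (hSn n _ hyN) (norm_nonneg _) (by positivity)
      _ = _ := by ring
  rw [← tendsto_add_atTop_iff_nat N]
  refine squeeze_zero (fun n => by positivity) hbound ?_
  simpa using (tendsto_pow_atTop_nhds_zero_of_lt_one (by positivity)
    ((mul_inv_lt_iff₀ hC).2 (by linarith))).mul_const (‖(T ^ N) x‖ * ‖(S ^ N) y‖)

theorem one_add_le_weight {M δ : ℝ} (hMδ : 1 + δ ≤ M) (hw1 : ∀ t ≤ (-1 : ℝ), w t = M)
    (hw2 : ∀ t ∈ Set.Icc (-1 : ℝ) 1, w t = M + ((t + 1) / 2) * (1 + δ - M))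
    (hw3 : ∀ t ≥ (1 : ℝ), w t = 1 + δ) (t : ℝ) : 1 + δ ≤ w t := by
  rcases le_or_gt t (-1) with h₁ | h₁
  · rw [hw1 t h₁]
    exact hMδ
  rcases le_or_gt t 1 with h₂ | h₂
  · rw [hw2 t ⟨h₁.le, h₂⟩]
    nlinarith
  · rw [hw3 t h₂.le]

end WeightedShifts

theorem semi_transitive_not_cesaro_both_directions_general
    (M δ : ℝ) (hMδ : 2 + 2 * δ ≤ M) (hδ : 1 ≤ δ)
    (w : ℝ → ℝ)
    (hw1 : ∀ t ≤ (-1 : ℝ), w t = M)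
    (hw2 : ∀ t ∈ Set.Icc (-1 : ℝ) 1, w t = M + ((t + 1) / 2) * (1 + δ - M))
    (hw3 : ∀ t ≥ (1 : ℝ), w t = 1 + δ)
    (T S : C₀(ℝ, ℂ) →L[ℂ] C₀(ℝ, ℂ))
    (hT : ∀ (f : C₀(ℝ, ℂ)) (t : ℝ), T f t = (w t : ℂ) * f (t - 1))
    (hS : ∀ (f : C₀(ℝ, ℂ)) (t : ℝ), S f t = ((w (t + 1) : ℂ))⁻¹ * f (t + 1))
    (hST : ∀ f, S (T f) = f) (hTS : ∀ f, T (S f) = f) :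
    (IsSemiTransitive T ∧ IsSemiTransitive S) ∧
      (¬ IsCesaroHyperTransitive T ∧ ¬ IsCesaroHyperTransitive S) := by
  have hw : ∀ t, 1 + δ ≤ |w t| := fun t =>
    (one_add_le_weight (by linarith) hw1 hw2 hw3 t).trans (le_abs_self _)
  have hS_half : ∀ f, ‖S f‖ ≤ 2⁻¹ * ‖f‖ := fun f =>
    (norm_apply_le_of_eqOn_zero_compl hS (by linarith) (s := univ) (fun t _ => hw t)
      (by simp)).trans (by gcongr; linarith)
  set D : Set C₀(ℝ, ℂ) := {f | HasCompactSupport f}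
  have hD : Dense D := ZeroAtInftyContinuousMap.dense_setOf_hasCompactSupport
  have hdecay : ∀ x ∈ D, ∀ y ∈ D, Tendsto (fun n => ‖(T ^ n) x‖ * ‖(S ^ n) y‖) atTop (𝓝 0) :=
    fun x hx y hy => tendsto_norm_pow_mul_norm_pow hT hS (by linarith) (by linarith) hw3 hw1 hx hy
  exact ⟨⟨isSemiTransitive_of_tendsto hTS hD hdecay,
      isSemiTransitive_of_tendsto hST hD fun x hx y hy => by
        simpa only [mul_comm] using hdecay y hy x hx⟩,
    not_isCesaroHyperTransitive_of_leftInverse hST hS_half,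
    not_isCesaroHyperTransitive_of_norm_apply_le fun f => (hS_half f).trans (by
      linarith [norm_nonneg f])⟩

theorem semi_transitive_not_cesaro_both_directions
    (M δ : ℝ) (hM : 0 < M) (hδ0 : 0 < δ) (hMδ : 2 + 2 * δ ≤ M) (hδ : 1 ≤ δ)
    (w : ℝ → ℝ)
    (hw1 : ∀ t ≤ (-1 : ℝ), w t = M)
    (hw2 : ∀ t ∈ Set.Icc (-1 : ℝ) 1, w t = M + ((t + 1) / 2) * (1 + δ - M))
    (hw3 : ∀ t ≥ (1 : ℝ), w t = 1 + δ)
    (T S : C₀(ℝ, ℂ) →L[ℂ] C₀(ℝ, ℂ))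
    (hT : ∀ (f : C₀(ℝ, ℂ)) (t : ℝ), T f t = (w t : ℂ) * f (t - 1))
    (hS : ∀ (f : C₀(ℝ, ℂ)) (t : ℝ), S f t = ((w (t + 1) : ℂ))⁻¹ * f (t + 1))
    (hST : ∀ f, S (T f) = f) (hTS : ∀ f, T (S f) = f) :
    (IsSemiTransitive T ∧ IsSemiTransitive S) ∧
      (¬ IsCesaroHyperTransitive T ∧ ¬ IsCesaroHyperTransitive S) :=
  semi_transitive_not_cesaro_both_directions_general M δ hMδ hδ w hw1 hw2 hw3 T S hT hS hST hTS
end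

section
/- Let B be the bilateral backward weighted shift on ℓ²(ℤ) determined by the weight sequence (w_j)_{j∈ℤ} with w_j = 2 for all j < 0 and w_j = 1/2 for all j ≥ 0, i.e. B e_j = w_j e_{j−1} for every j ∈ ℤ, where (e_j)_{j∈ℤ} is the canonical orthonormal basis. Then B is not hypercyclic on ℓ²(ℤ); that is, there is no x ∈ ℓ²(ℤ) whose orbit { Bⁿx : n ∈ ℕ } is dense in ℓ²(ℤ). -/
/-!
The `0`-th coordinate of `Bⁿ x` is `w₁ ⋯ wₙ · xₙ = 2⁻ⁿ xₙ`, so the whole orbit of `x` lies in the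
closed set `{y | ‖y 0‖ ≤ ‖x‖}`, which is not all of `ℓ²(ℤ)`.
-/

open Finset ENNReal

section

variable {𝕜 : Type*} [NontriviallyNormedField 𝕜] {p : ℝ≥0∞} [Fact (1 ≤ p)]

theorem lp.not_dense_of_forall_norm_apply_le {ι : Type*} {s : Set (lp (fun _ : ι => 𝕜) p)}
    (i : ι) (C : ℝ) (hs : ∀ y ∈ s, ‖y i‖ ≤ C) : ¬ Dense s := by
  classical
  intro hdense
  have hclosed : IsClosed {y : lp (fun _ : ι => 𝕜) p | ‖y i‖ ≤ C} :=
    isClosed_le (lp.lipschitzWith_one_eval p i).continuous.norm continuous_const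
  obtain ⟨a, ha⟩ := NormedField.exists_lt_norm 𝕜 C
  have hmem := Set.eq_univ_iff_forall.mp
    (hclosed.closure_eq.symm.trans (hdense.mono hs).closure_eq) (lp.single p i a)
  simp only [Set.mem_ofPred_eq, lp.single_apply_self] at hmem
  linarith

variable (p) in
def IsWeightedBackwardShift (w : ℤ → 𝕜) (B : lp (fun _ : ℤ => 𝕜) p →L[𝕜] lp (fun _ : ℤ => 𝕜) p) :
    Prop :=
  ∀ j : ℤ, B (lp.single p j 1) = w j • lp.single p (j - 1) 1

namespace IsWeightedBackwardShift

variable {w : ℤ → 𝕜} {B : lp (fun _ : ℤ => 𝕜) p →L[𝕜] lp (fun _ : ℤ => 𝕜) p}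

theorem apply_apply (hB : IsWeightedBackwardShift p w B) (hp : p ≠ ∞) (v : lp (fun _ : ℤ => 𝕜) p)
    (k : ℤ) : B v k = w (k + 1) * v (k + 1) := by
  have hsum : HasSum (fun j => B (lp.single p j (v j)) k) (B v k) :=
    (lp.evalCLM 𝕜 (fun _ : ℤ => 𝕜) p k).hasSum (B.hasSum (lp.hasSum_single hp v))
  have hterm : (fun j => B (lp.single p j (v j)) k) =
      Pi.single (k + 1) (w (k + 1) * v (k + 1)) := by
    funext j
    rw [← mul_one (v j), ← smul_eq_mul, lp.single_smul, map_smul, hB j]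
    by_cases hj : j = k + 1
    · subst hj
      simp [lp.single_apply, mul_comm]
    · simp [hj, Pi.single_eq_of_ne (show k ≠ j - 1 by omega)]
  rw [hterm] at hsum
  exact hsum.unique (hasSum_pi_single _ _)

theorem pow_apply_apply (hB : IsWeightedBackwardShift p w B) (hp : p ≠ ∞) (n : ℕ)
    (v : lp (fun _ : ℤ => 𝕜) p) (k : ℤ) :
    (B ^ n) v k = (∏ i ∈ range n, w (k + i + 1)) * v (k + n) := by
  induction n generalizing v with
  | zero => simp
  | succ n ih =>
    rw [pow_succ, mul_apply_eq_comp, ih, hB.apply_apply hp, prod_range_succ]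
    push_cast
    ring_nf

end IsWeightedBackwardShift

end

theorem backward_shift_not_hypercyclic_general
    (w : ℤ → ℂ)
    (hw_nonneg : ∀ j : ℤ, 0 ≤ j → w j = 1 / 2)
    (B : lp (fun _ : ℤ => ℂ) 2 →L[ℂ] lp (fun _ : ℤ => ℂ) 2)
    (hB : ∀ j : ℤ, B (lp.single 2 j 1) = w j • lp.single 2 (j - 1) 1) :
    ¬ ∃ x : lp (fun _ : ℤ => ℂ) 2,
        Dense {y : lp (fun _ : ℤ => ℂ) 2 | ∃ n : ℕ, 1 ≤ n ∧ y = (B ^ n) x} := by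
  rintro ⟨x, hx⟩
  refine lp.not_dense_of_forall_norm_apply_le 0 ‖x‖ ?_ hx
  rintro _ ⟨n, -, rfl⟩
  have hweights : ∏ i ∈ range n, w (0 + i + 1) = (1 / 2) ^ n := by
    rw [prod_congr rfl fun i _ => hw_nonneg _ (by omega), prod_const, card_range]
  rw [IsWeightedBackwardShift.pow_apply_apply hB ofNat_ne_top, hweights, norm_mul, norm_pow]
  calc ‖(1 / 2 : ℂ)‖ ^ n * ‖x (0 + n)‖ ≤ 1 * ‖x‖ :=
        mul_le_mul (pow_le_one₀ (norm_nonneg _) (by norm_num))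
          (lp.norm_apply_le_norm two_ne_zero x _) (norm_nonneg _) zero_le_one
    _ = ‖x‖ := one_mul _

theorem backward_shift_not_hypercyclic
    (w : ℤ → ℂ)
    (hw_neg : ∀ j : ℤ, j < 0 → w j = 2)
    (hw_nonneg : ∀ j : ℤ, 0 ≤ j → w j = 1 / 2)
    (B : lp (fun _ : ℤ => ℂ) 2 →L[ℂ] lp (fun _ : ℤ => ℂ) 2)
    (hB : ∀ j : ℤ, B (lp.single 2 j 1) = w j • lp.single 2 (j - 1) 1) :
    ¬ ∃ x : lp (fun _ : ℤ => ℂ) 2,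
        Dense {y : lp (fun _ : ℤ => ℂ) 2 | ∃ n : ℕ, 1 ≤ n ∧ y = (B ^ n) x} :=
  backward_shift_not_hypercyclic_general w hw_nonneg B hB
end

section
/- Let T be the bilateral weighted forward shift on ℓ²(ℤ) determined by the weight sequence (w_j)_{j∈ℤ} with w_{−j} = (j+1)/j for all j ∈ ℕ (j ≥ 1) and w_j = 1/2 for all j ≥ 0, i.e. T e_j = w_j e_{j+1} for every j ∈ ℤ, where (e_j)_{j∈ℤ} is the canonical orthonormal basis. Then T is hypercyclic on ℓ²(ℤ) (there exists x whose orbit { Tⁿx : n ∈ ℕ } is dense), but T is not Cesàro hypercyclic on ℓ²(ℤ) (there is no x ∈ ℓ²(ℤ) such that the set { n⁻¹·Tⁿx : n ≥ 1 } is dense in ℓ²(ℤ)). -/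
/-!
Birkhoff's transitivity theorem and Kitai's criterion make `T` hypercyclic once the vectors whose
forward orbit tends to `0` and those having a backward orbit tending to `0` are both dense; both
sets are subspaces, so it suffices that they contain every `e_j`. Forward orbits eventually only
meet the weights `1/2`. The weights `(m+1)/m` at negative indices telescope, so the backward orbit
of `e_j` decays like `1/n`.

The same telescoping gives `(Tⁿ x)₀ = (n + 1) x₋ₙ`, so the `0`-th coordinate of `n⁻¹ Tⁿ x` never
exceeds `2‖x‖`, and the Cesàro orbit stays in a proper closed set.
-/

open Filter Topology TopologicalSpace
open scoped ENNReal

def IsTopologicallyTransitive {X : Type*} [TopologicalSpace X] (f : X → X) : Prop :=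
  ∀ U V : Set X, IsOpen U → IsOpen V → U.Nonempty → V.Nonempty →
    ∃ n, 1 ≤ n ∧ (U ∩ f^[n] ⁻¹' V).Nonempty

theorem IsTopologicallyTransitive.exists_dense_orbit {X : Type*} [TopologicalSpace X]
    [BaireSpace X] [SecondCountableTopology X] [Nonempty X] {f : X → X}
    (hf_trans : IsTopologicallyTransitive f) (hf : Continuous f) :
    ∃ x, Dense {y | ∃ n, 1 ≤ n ∧ y = f^[n] x} := by
  set B := {b ∈ countableBasis X | b.Nonempty}
  have hB : B.Countable := (countable_countableBasis X).mono (Set.sep_subset _ _)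
  have h_open : ∀ b ∈ B, IsOpen (⋃ n ≥ 1, f^[n] ⁻¹' b) := fun b hb =>
    isOpen_biUnion fun n _ => (isOpen_of_mem_countableBasis hb.1).preimage (hf.iterate n)
  have h_dense : ∀ b ∈ B, Dense (⋃ n ≥ 1, f^[n] ⁻¹' b) := fun b hb =>
    dense_iff_inter_open.2 fun U hU hUne => by
      obtain ⟨n, hn, x, hxU, hxb⟩ :=
        hf_trans U b hU (isOpen_of_mem_countableBasis hb.1) hUne hb.2
      exact ⟨x, hxU, Set.mem_biUnion hn hxb⟩
  obtain ⟨x, hx⟩ := (dense_biInter_of_isOpen h_open hB h_dense).nonempty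
  refine ⟨x, (isBasis_countableBasis X).dense_iff.2 fun b hb hbne => ?_⟩
  obtain ⟨n, hn, hxn⟩ := Set.mem_iUnion₂.1 (Set.mem_iInter₂.1 hx b ⟨hb, hbne⟩)
  exact ⟨f^[n] x, hxn, n, hn, rfl⟩

namespace ContinuousLinearMap

variable {R E : Type*} [Semiring R] [AddCommMonoid E] [TopologicalSpace E] [Module R E]
  {T : E →L[R] E}

theorem pow_apply_eq_of_apply_succ_eq {z : ℕ → E} (hz : ∀ n, T (z (n + 1)) = z n) (n : ℕ) :
    (T ^ n) (z n) = z 0 := by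
  induction n with
  | zero => rfl
  | succ n ih => rw [pow_succ, mul_apply_eq_comp, hz, ih]

variable [ContinuousAdd E] [ContinuousConstSMul R E] (T)

def forwardNull : Submodule R E where
  carrier := {x | Tendsto (fun n => (T ^ n) x) atTop (𝓝 0)}
  add_mem' hx hy := by simpa only [Set.mem_ofPred_eq, map_add, add_zero] using hx.add hy
  zero_mem' := by simpa only [Set.mem_ofPred_eq, map_zero] using tendsto_const_nhds
  smul_mem' c _ hx := by
    simpa only [Set.mem_ofPred_eq, map_smul, smul_zero] using hx.const_smul c

def backwardNull : Submodule R E where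
  carrier := {y | ∃ z : ℕ → E, z 0 = y ∧ (∀ n, T (z (n + 1)) = z n) ∧ Tendsto z atTop (𝓝 0)}
  add_mem' := by
    rintro _ _ ⟨z, rfl, hz, hz0⟩ ⟨z', rfl, hz', hz'0⟩
    exact ⟨fun n => z n + z' n, rfl, fun n => by rw [map_add, hz, hz'],
      by simpa only [add_zero] using hz0.add hz'0⟩
  zero_mem' := ⟨0, rfl, fun _ => map_zero T, tendsto_const_nhds⟩
  smul_mem' := by
    rintro c _ ⟨z, rfl, hz, hz0⟩
    exact ⟨fun n => c • z n, rfl, fun n => by rw [map_smul, hz],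
      by simpa only [smul_zero] using hz0.const_smul c⟩

variable {T}

theorem mem_forwardNull_of_apply_mem {x : E} (hx : T x ∈ T.forwardNull) :
    x ∈ T.forwardNull := by
  have hx : Tendsto (fun n => (T ^ n) (T x)) atTop (𝓝 0) := hx
  exact (tendsto_add_atTop_iff_nat 1).1 <| by simpa only [pow_succ, mul_apply_eq_comp] using hx

theorem apply_mem_backwardNull {y : E} (hy : y ∈ T.backwardNull) : T y ∈ T.backwardNull := by
  obtain ⟨z, rfl, hz, hz0⟩ := hy
  exact ⟨fun n => T (z n), rfl, fun n => congrArg T (hz n),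
    (T.continuous.tendsto' 0 0 (map_zero T)).comp hz0⟩

/-- Kitai's hypercyclicity criterion. -/
theorem isTopologicallyTransitive_of_dense_forwardNull_of_dense_backwardNull
    (h_fwd : Dense (T.forwardNull : Set E)) (h_bwd : Dense (T.backwardNull : Set E)) :
    IsTopologicallyTransitive T := by
  intro U V hU hV hUne hVne
  obtain ⟨u, huU, hu⟩ := h_fwd.inter_open_nonempty U hU hUne
  obtain ⟨_, hvV, z, rfl, hz, hz0⟩ := h_bwd.inter_open_nonempty V hV hVne
  have h_start : ∀ᶠ n in atTop, u + z n ∈ U := by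
    have : Tendsto (fun n => u + z n) atTop (𝓝 u) := by simpa using hz0.const_add u
    exact this.eventually (hU.mem_nhds huU)
  have h_end : ∀ᶠ n in atTop, (T ^ n) (u + z n) ∈ V := by
    have hu : Tendsto (fun n => (T ^ n) u) atTop (𝓝 0) := hu
    have : Tendsto (fun n => (T ^ n) (u + z n)) atTop (𝓝 (z 0)) := by
      simp only [map_add, pow_apply_eq_of_apply_succ_eq hz]
      simpa only [zero_add] using hu.add_const (z 0)
    exact this.eventually (hV.mem_nhds hvV)
  obtain ⟨n, hn, hU', hV'⟩ := ((eventually_ge_atTop 1).and (h_start.and h_end)).exists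
  exact ⟨n, hn, u + z n, hU', by rwa [Set.mem_preimage, ← FunLike.coe_pow_eq_iterate]⟩

end ContinuousLinearMap

namespace lp

variable {ι 𝕜 : Type*} [DecidableEq ι] [NormedField 𝕜] {p : ℝ≥0∞} [Fact (1 ≤ p)]

theorem dense_span_single (hp : p ≠ ⊤) :
    Dense (Submodule.span 𝕜 (Set.range fun i : ι => lp.single p i (1 : 𝕜)) :
      Set (lp (fun _ : ι => 𝕜) p)) := by
  intro f
  refine mem_closure_of_tendsto (lp.hasSum_single hp f) (Eventually.of_forall fun s => ?_)
  refine Submodule.sum_mem _ fun i _ => ?_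
  have hi : lp.single p i (1 : 𝕜) ∈
      Submodule.span 𝕜 (Set.range fun i : ι => lp.single p i (1 : 𝕜)) :=
    Submodule.subset_span (Set.mem_range_self i)
  simpa only [← lp.single_smul, smul_eq_mul, mul_one] using Submodule.smul_mem _ (f i) hi

theorem dense_of_single_mem (hp : p ≠ ⊤) {S : Submodule 𝕜 (lp (fun _ : ι => 𝕜) p)}
    (hS : ∀ i, lp.single p i 1 ∈ S) : Dense (S : Set (lp (fun _ : ι => 𝕜) p)) :=
  (dense_span_single hp).mono (Submodule.span_le.2 (Set.range_subset_iff.2 hS))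

theorem separableSpace [Countable ι] [SeparableSpace 𝕜] (hp : p ≠ ⊤) :
    SeparableSpace (lp (fun _ : ι => 𝕜) p) := by
  have := ((Set.countable_range fun i : ι => lp.single p i (1 : 𝕜)).isSeparable.span
    (R := 𝕜)).closure
  rw [(dense_span_single hp).closure_eq] at this
  exact isSeparable_univ_iff.1 this

def IsWeightedShift (w : ℤ → 𝕜) (T : lp (fun _ : ℤ => 𝕜) p →L[𝕜] lp (fun _ : ℤ => 𝕜) p) :
    Prop :=
  ∀ j, T (lp.single p j 1) = w j • lp.single p (j + 1) 1

namespace IsWeightedShift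

theorem apply_apply {w : ℤ → 𝕜} {T : lp (fun _ : ℤ => 𝕜) p →L[𝕜] lp (fun _ : ℤ => 𝕜) p}
    (hT : IsWeightedShift w T) (hp : p ≠ ⊤) (x : lp (fun _ : ℤ => 𝕜) p) (i : ℤ) :
    T x i = w (i - 1) * x (i - 1) := by
  have : (lp.evalCLM 𝕜 (fun _ : ℤ => 𝕜) p i).comp T =
      w (i - 1) • lp.evalCLM 𝕜 (fun _ : ℤ => 𝕜) p (i - 1) := by
    refine lp.ext_continuousLinearMap hp fun j => ContinuousLinearMap.ext_ring ?_
    show T (lp.single p j 1) i = w (i - 1) * (lp.single p j (1 : 𝕜) : ℤ → 𝕜) (i - 1)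
    rw [hT j]
    obtain rfl | h := eq_or_ne i (j + 1) <;> simp [lp.single_apply, *, sub_eq_iff_eq_add]
  exact congr($this x)

open ContinuousLinearMap

variable {w : ℤ → ℂ} {T : lp (fun _ : ℤ => ℂ) p →L[ℂ] lp (fun _ : ℤ => ℂ) p}

theorem pow_apply_single_of_nonneg (hT : IsWeightedShift w T)
    (hw_nonneg : ∀ j : ℤ, 0 ≤ j → w j = 1 / 2) {j : ℤ} (hj : 0 ≤ j) (n : ℕ) :
    (T ^ n) (lp.single p j 1) = (1 / 2 : ℂ) ^ n • lp.single p (j + n) 1 := by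
  induction n generalizing j with
  | zero => simp
  | succ n ih =>
    rw [pow_succ, mul_apply_eq_comp, hT j, hw_nonneg j hj, map_smul, ih (by omega), smul_smul,
      ← pow_succ']
    congr 2
    push_cast
    ring

theorem single_mem_forwardNull (hT : IsWeightedShift w T)
    (hw_nonneg : ∀ j : ℤ, 0 ≤ j → w j = 1 / 2) (j : ℤ) : lp.single p j 1 ∈ T.forwardNull := by
  have h_nonneg : ∀ j, 0 ≤ j → lp.single p j 1 ∈ T.forwardNull := by
    intro j hj
    show Tendsto (fun n => (T ^ n) (lp.single p j 1)) atTop (𝓝 0)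
    rw [tendsto_zero_iff_norm_tendsto_zero]
    simp only [hT.pow_apply_single_of_nonneg hw_nonneg hj, norm_smul, norm_pow,
      lp.norm_single (zero_lt_one.trans_le Fact.out), norm_one, mul_one]
    exact tendsto_pow_atTop_nhds_zero_of_lt_one (by norm_num) (by norm_num)
  rcases le_total 0 j with hj | hj
  · exact h_nonneg j hj
  · induction j, hj using Int.leInductionDown with
    | base => exact h_nonneg 0 le_rfl
    | pred j _ ih =>
      refine mem_forwardNull_of_apply_mem ?_
      rw [hT, sub_add_cancel]
      exact Submodule.smul_mem _ _ ih

/-- The coefficients come from the telescoping product `∏_{m=a+1}^{a+n} (m+1)/m = (a+n+1)/(a+1)`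
of the weights at `-a-1, …, -a-n`. -/
theorem single_neg_mem_backwardNull (hT : IsWeightedShift w T)
    (hw_neg : ∀ j : ℕ, 1 ≤ j → w (-(j : ℤ)) = ((j : ℂ) + 1) / (j : ℂ)) (a : ℕ) :
    lp.single p (-(a : ℤ)) 1 ∈ T.backwardNull := by
  refine ⟨fun n => ((a + 1 : ℂ) / (a + n + 1)) • lp.single p (-(a : ℤ) - n) 1,
    ?_, fun n => ?_, ?_⟩
  · simp [div_self (Nat.cast_add_one_ne_zero (R := ℂ) a)]
  · have hw : w (-a - (n + 1 : ℕ)) = (a + n + 2) / (a + n + 1) := by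
      have := hw_neg (a + n + 1) (by omega)
      push_cast at this ⊢
      rw [show -(a : ℤ) - (n + 1) = -(a + n + 1) by ring, this]
      ring
    rw [map_smul, hT, hw, smul_smul, show -(a : ℤ) - (n + 1 : ℕ) + 1 = -a - n by push_cast; ring]
    congr 1
    have h1 : (a + n + 1 : ℂ) ≠ 0 := by exact_mod_cast Nat.succ_ne_zero (a + n)
    have h2 : (a + n + 2 : ℂ) ≠ 0 := by exact_mod_cast Nat.succ_ne_zero (a + n + 1)
    push_cast
    rw [show (a + (n + 1) + 1 : ℂ) = a + n + 2 by ring]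
    field_simp
  · rw [tendsto_zero_iff_norm_tendsto_zero]
    have h_norm : ∀ n : ℕ, ‖((a + 1 : ℂ) / (a + n + 1)) •
        (lp.single p (-(a : ℤ) - n) 1 : lp (fun _ : ℤ => ℂ) p)‖ =
          (a + 1) / ((n : ℝ) + (a + 1)) := by
      intro n
      rw [norm_smul, lp.norm_single (zero_lt_one.trans_le Fact.out), norm_one, mul_one,
        norm_div]
      norm_cast
      push_cast
      ring
    simp only [h_norm]
    exact tendsto_const_nhds.div_atTop
      (tendsto_atTop_add_const_right _ _ tendsto_natCast_atTop_atTop)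

theorem single_mem_backwardNull (hT : IsWeightedShift w T)
    (hw_neg : ∀ j : ℕ, 1 ≤ j → w (-(j : ℤ)) = ((j : ℂ) + 1) / (j : ℂ))
    (hw_nonneg : ∀ j : ℤ, 0 ≤ j → w j = 1 / 2) (j : ℤ) : lp.single p j 1 ∈ T.backwardNull := by
  rcases le_total j 0 with hj | hj
  · obtain ⟨a, rfl⟩ := Int.exists_eq_neg_ofNat hj
    exact hT.single_neg_mem_backwardNull hw_neg a
  · induction j, hj using Int.leInduction with
    | base => simpa using hT.single_neg_mem_backwardNull (p := p) hw_neg 0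
    | succ j hj ih =>
      have h : lp.single p (j + 1) 1 = (2 : ℂ) • T (lp.single p j 1) := by
        rw [hT, hw_nonneg j hj, smul_smul]
        norm_num
      rw [h]
      exact Submodule.smul_mem _ _ (apply_mem_backwardNull ih)

theorem pow_apply_apply_zero (hT : IsWeightedShift w T) (hp : p ≠ ⊤)
    (hw_neg : ∀ j : ℕ, 1 ≤ j → w (-(j : ℤ)) = ((j : ℂ) + 1) / (j : ℂ))
    (x : lp (fun _ : ℤ => ℂ) p) (n : ℕ) :
    (T ^ n) x 0 = (n + 1) * x (-(n : ℤ)) := by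
  induction n generalizing x with
  | zero => simp
  | succ n ih =>
    have hw : w (-n - 1) = (n + 2) / (n + 1) := by
      have := hw_neg (n + 1) (by omega)
      push_cast at this ⊢
      rw [show -(n : ℤ) - 1 = -(n + 1) by ring, this]
      ring
    rw [pow_succ, mul_apply_eq_comp, ih, hT.apply_apply hp, hw,
      show -(n : ℤ) - 1 = -(n + 1 : ℕ) by push_cast; ring]
    field_simp
    push_cast
    ring

theorem not_dense_inv_smul_pow_orbit (hT : IsWeightedShift w T) (hp : p ≠ ⊤)
    (hw_neg : ∀ j : ℕ, 1 ≤ j → w (-(j : ℤ)) = ((j : ℂ) + 1) / (j : ℂ))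
    (x : lp (fun _ : ℤ => ℂ) p) :
    ¬ Dense {y | ∃ n : ℕ, 1 ≤ n ∧ y = ((n : ℂ))⁻¹ • (T ^ n) x} := by
  intro h_dense
  set C : Set (lp (fun _ : ℤ => ℂ) p) := {y | ‖y 0‖ ≤ 2 * ‖x‖}
  have hC : IsClosed C :=
    isClosed_le (continuous_norm.comp (lp.evalCLM ℂ (fun _ : ℤ => ℂ) p 0).continuous)
      continuous_const
  have h_orbit : {y | ∃ n : ℕ, 1 ≤ n ∧ y = ((n : ℂ))⁻¹ • (T ^ n) x} ⊆ C := by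
    rintro _ ⟨n, hn, rfl⟩
    have hn : (1 : ℝ) ≤ n := by exact_mod_cast hn
    calc ‖(((n : ℂ))⁻¹ • (T ^ n) x) 0‖ = (n + 1) / n * ‖x (-(n : ℤ))‖ := by
          rw [lp.coeFn_smul, Pi.smul_apply, hT.pow_apply_apply_zero hp hw_neg, smul_eq_mul,
            norm_mul, norm_mul, norm_inv, Complex.norm_natCast,
            show (n : ℂ) + 1 = (n + 1 : ℕ) by push_cast; ring, Complex.norm_natCast]
          push_cast
          ring
      _ ≤ 2 * ‖x‖ := by
          gcongr
          · rw [div_le_iff₀ (by linarith)]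
            linarith
          · exact lp.norm_apply_le_norm (zero_lt_one.trans_le Fact.out).ne' x _
  have hC_univ : C = Set.univ :=
    Set.eq_univ_of_univ_subset (h_dense.closure_eq ▸ hC.closure_subset_iff.2 h_orbit)
  have := hC_univ ▸ Set.mem_univ (((2 * ‖x‖ + 1 : ℝ) : ℂ) • lp.single p 0 1)
  simp only [C, Set.mem_ofPred_eq, lp.coeFn_smul, Pi.smul_apply, lp.single_apply_self,
    smul_eq_mul, mul_one, Complex.norm_real, Real.norm_of_nonneg (by positivity : 0 ≤ 2 * ‖x‖ + 1)]
    at this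
  linarith

end IsWeightedShift

end lp

theorem forward_shift_hypercyclic_not_cesaro_hypercyclic
    (w : ℤ → ℂ)
    (hw_neg : ∀ j : ℕ, 1 ≤ j → w (-(j : ℤ)) = ((j : ℂ) + 1) / (j : ℂ))
    (hw_nonneg : ∀ j : ℤ, 0 ≤ j → w j = 1 / 2)
    (T : lp (fun _ : ℤ => ℂ) 2 →L[ℂ] lp (fun _ : ℤ => ℂ) 2)
    (hT : ∀ j : ℤ, T (lp.single 2 j 1) = w j • lp.single 2 (j + 1) 1) :
    (∃ x : lp (fun _ : ℤ => ℂ) 2,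
        Dense {y : lp (fun _ : ℤ => ℂ) 2 | ∃ n : ℕ, 1 ≤ n ∧ y = (T ^ n) x}) ∧
    ¬ ∃ x : lp (fun _ : ℤ => ℂ) 2,
        Dense {y : lp (fun _ : ℤ => ℂ) 2 | ∃ n : ℕ, 1 ≤ n ∧
          y = ((n : ℂ))⁻¹ • (T ^ n) x} := by
  have hT : lp.IsWeightedShift w T := hT
  have hp : (2 : ℝ≥0∞) ≠ ⊤ := ENNReal.ofNat_ne_top
  have : SeparableSpace (lp (fun _ : ℤ => ℂ) 2) := lp.separableSpace hp
  refine ⟨?_, fun ⟨x, hx⟩ => hT.not_dense_inv_smul_pow_orbit hp hw_neg x hx⟩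
  have h_trans : IsTopologicallyTransitive T :=
    T.isTopologicallyTransitive_of_dense_forwardNull_of_dense_backwardNull
      (lp.dense_of_single_mem hp (hT.single_mem_forwardNull hw_nonneg))
      (lp.dense_of_single_mem hp (hT.single_mem_backwardNull hw_neg hw_nonneg))
  obtain ⟨x, hx⟩ := h_trans.exists_dense_orbit T.continuous
  exact ⟨x, by simpa only [FunLike.coe_pow_eq_iterate] using hx⟩
end
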